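/- arXiv:1007.2040 — 8 statements merged into one kernel-verified Lean document; each statement's English description precedes it below -/
import Mathlib

section
/- Let X be a vector space over a subfield R of the reals, and let f, g : X → ℝ be R-linear functionals. Then {x : g x ≤ 0} ⊇ {x : f x ≤ 0} if and only if there exists α ∈ ℝ, α ≥ 0, such that g = α • f. -/
/-!
If `f x ≤ 0` forces `g x ≤ 0`, then `f x ≤ f y` forces `g x ≤ g y`. Fix `x₀` with `f x₀ > 0`.
For every rational `q`, comparing `x` with `q • x₀` shows that `f x ≤ q f x₀` implies
`g x ≤ q g x₀` and the reverse; since the rationals are dense in `ℝ`, this pins down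
`g x = (f x / f x₀) g x₀`. The order is essential: `ℝ` need not be one-dimensional over `R`, so
`ker f ⊆ ker g` alone would not make `g` a real multiple of `f`.
-/

theorem eq_mul_of_forall_rat_bounds {K : Type*} [Field K] [LinearOrder K]
    [IsStrictOrderedRing K] [Archimedean K] {s t c : K} (hc : 0 ≤ c)
    (hle : ∀ q : ℚ, t ≤ q → s ≤ q * c) (hge : ∀ q : ℚ, (q : K) ≤ t → q * c ≤ s) :
    s = t * c := by
  rcases hc.eq_or_lt with rfl | hc
  · obtain ⟨q, hq⟩ := exists_rat_gt t
    obtain ⟨p, hp⟩ := exists_rat_lt t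
    rw [mul_zero]
    exact le_antisymm (by simpa using hle q hq.le) (by simpa using hge p hp.le)
  · rw [← div_eq_iff hc.ne']
    refine le_antisymm (le_of_forall_lt_rat_imp_le fun q hq => ?_)
      (le_of_forall_rat_lt_imp_le fun q hq => ?_)
    · exact (div_le_iff₀ hc).2 (hle q hq.le)
    · exact (le_div_iff₀ hc).2 (hge q hq.le)

section

variable {R : Subfield ℝ} {X : Type*} [AddCommGroup X] [Module R X] {f g : X →ₗ[R] ℝ}

theorem LinearMap.map_subfield_ratCast_smul (f : X →ₗ[R] ℝ) (q : ℚ) (x : X) :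
    f ((q : R) • x) = q * f x := by
  rw [map_smul, Subfield.smul_def, smul_eq_mul, SubfieldClass.coe_ratCast]

theorem apply_le_apply_of_nonpos_subset (h : {x : X | f x ≤ 0} ⊆ {x : X | g x ≤ 0}) {x y : X}
    (hxy : f x ≤ f y) : g x ≤ g y := by
  have : g (x - y) ≤ 0 := h (show f (x - y) ≤ 0 by rw [map_sub]; linarith)
  rwa [map_sub, sub_nonpos] at this

theorem apply_eq_apply_of_nonpos_subset (h : {x : X | f x ≤ 0} ⊆ {x : X | g x ≤ 0}) {x y : X}
    (hxy : f x = f y) : g x = g y :=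
  le_antisymm (apply_le_apply_of_nonpos_subset h hxy.le) (apply_le_apply_of_nonpos_subset h hxy.ge)

theorem apply_nonneg_of_nonpos_subset (h : {x : X | f x ≤ 0} ⊆ {x : X | g x ≤ 0}) {x : X}
    (hx : 0 ≤ f x) : 0 ≤ g x := by
  simpa using apply_le_apply_of_nonpos_subset h (show f 0 ≤ f x by rwa [map_zero])

theorem eq_div_mul_of_nonpos_subset (h : {x : X | f x ≤ 0} ⊆ {x : X | g x ≤ 0}) {x₀ : X}
    (hx₀ : 0 < f x₀) (x : X) : g x = g x₀ / f x₀ * f x := by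
  have key : g x = f x / f x₀ * g x₀ := by
    refine eq_mul_of_forall_rat_bounds (apply_nonneg_of_nonpos_subset h hx₀.le)
      (fun q hq => ?_) (fun q hq => ?_)
    · rw [← g.map_subfield_ratCast_smul]
      refine apply_le_apply_of_nonpos_subset h ?_
      rwa [f.map_subfield_ratCast_smul, ← div_le_iff₀ hx₀]
    · rw [← g.map_subfield_ratCast_smul]
      refine apply_le_apply_of_nonpos_subset h ?_
      rwa [f.map_subfield_ratCast_smul, ← le_div_iff₀ hx₀]
  rw [key]
  ring

end

theorem stmt0 (R : Subfield ℝ) (X : Type*) [AddCommGroup X] [Module R X]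
    (f g : X →ₗ[R] ℝ) :
    {x : X | f x ≤ 0} ⊆ {x : X | g x ≤ 0} ↔
      ∃ α : ℝ, 0 ≤ α ∧ ∀ x, g x = α * f x := by
  constructor
  · intro h
    obtain hf | ⟨y, hy⟩ := forall_or_exists_not fun x => f x = 0
    · refine ⟨0, le_rfl, fun x => ?_⟩
      rw [zero_mul, ← map_zero g]
      exact apply_eq_apply_of_nonpos_subset h (by rw [hf, map_zero])
    · obtain ⟨x₀, hx₀⟩ : ∃ x₀, 0 < f x₀ := by
        rcases lt_or_gt_of_ne hy with hy | hy
        · exact ⟨-y, by rwa [map_neg, neg_pos]⟩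
        · exact ⟨y, hy⟩
      exact ⟨g x₀ / f x₀, div_nonneg (apply_nonneg_of_nonpos_subset h hx₀.le) hx₀.le,
        eq_div_mul_of_nonpos_subset h hx₀⟩
  · rintro ⟨α, hα, hg⟩ x hx
    exact (hg x).trans_le (mul_nonpos_of_nonneg_of_nonpos hα hx)
end

section
/- Let X be a seminormed real vector space and f₁, …, f_N, g bounded (continuous) linear functionals on X. Then {x : g x ≤ 0} ⊇ ⋂_{k=1}^N {x : f_k x ≤ 0} if and only if there exist α₁, …, α_N ∈ ℝ, α_k ≥ 0, such that g = ∑_{k=1}^N α_k • f_k. (Farkas Lemma for functionals.) -/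
/-!
Induction on `N`. If the last functional `ℓ = f_N` is not needed, the induction hypothesis applies
directly. Otherwise some `x₀` satisfies `f_k x₀ ≤ 0` for `k < N` but `g x₀ > 0`, which forces
`ℓ x₀ > 0`. Composing every functional with the projection `x ↦ x - (ℓ x / ℓ x₀) • x₀` onto
`ker ℓ` eliminates `ℓ` from the system; the induction hypothesis then writes `g` as a nonnegative
combination of the `f_k`, `k < N`, modulo a multiple of `ℓ`, and evaluating at `x₀` shows that
this multiple is nonnegative.
-/

lemma exists_nonneg_eq_sum_smul_snoc {R M : Type*} [Semiring R] [Preorder R] [AddCommMonoid M]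
    [Module R M] {N : ℕ} {f : Fin (N + 1) → M} {g : M} {α : Fin N → R} {a : R} (hα : ∀ k, 0 ≤ α k) (ha : 0 ≤ a)
    (hg : g = ∑ k, α k • f k.castSucc + a • f (Fin.last N)) :
    ∃ α' : Fin (N + 1) → R, (∀ k, 0 ≤ α' k) ∧ g = ∑ k, α' k • f k :=
  ⟨Fin.snoc α a, Fin.lastCases (by simpa using ha) (by simpa using hα),
    by simpa [Fin.sum_univ_castSucc] using hg⟩

namespace LinearMap

variable {𝕜 X : Type*} [Field 𝕜] [AddCommGroup X] [Module 𝕜 X]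

def projAlong (ℓ : Module.Dual 𝕜 X) (x₀ : X) : X →ₗ[𝕜] X :=
  id - (ℓ x₀)⁻¹ • ℓ.smulRight x₀

lemma projAlong_apply (ℓ : Module.Dual 𝕜 X) (x₀ x : X) :
    projAlong ℓ x₀ x = x - ((ℓ x₀)⁻¹ * ℓ x) • x₀ := by
  simp [projAlong, mul_smul]

lemma apply_projAlong {ℓ : Module.Dual 𝕜 X} {x₀ : X} (h : ℓ x₀ ≠ 0) (x : X) :
    ℓ (projAlong ℓ x₀ x) = 0 := by
  rw [projAlong_apply, map_sub, map_smul, smul_eq_mul, mul_assoc, mul_comm (ℓ x), ← mul_assoc,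
    inv_mul_cancel₀ h, one_mul, sub_self]

lemma eq_comp_projAlong_add (φ ℓ : Module.Dual 𝕜 X) (x₀ : X) :
    φ = φ ∘ₗ projAlong ℓ x₀ + ((ℓ x₀)⁻¹ * φ x₀) • ℓ := by
  ext x
  simp only [add_apply, comp_apply, projAlong_apply, map_sub, map_smul, smul_apply, smul_eq_mul]
  ring

variable [LinearOrder 𝕜] [IsStrictOrderedRing 𝕜]

lemma eq_zero_of_forall_nonpos {g : Module.Dual 𝕜 X} (h : ∀ x, g x ≤ 0) : g = 0 := by
  ext x
  have := h (-x)
  rw [map_neg] at this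
  exact le_antisymm (h x) (neg_nonpos.mp this)

lemma sum_smul_apply_nonpos {ι : Type*} [Fintype ι] {f : ι → Module.Dual 𝕜 X} {α : ι → 𝕜}
    (hα : ∀ k, 0 ≤ α k) {x : X} (hx : ∀ k, f k x ≤ 0) : (∑ k, α k • f k) x ≤ 0 := by
  simp only [sum_apply, smul_apply, smul_eq_mul]
  exact Finset.sum_nonpos fun k _ => mul_nonpos_of_nonneg_of_nonpos (hα k) (hx k)

theorem exists_nonneg_eq_sum_smul_of_forall_nonpos {N : ℕ} (f : Fin N → Module.Dual 𝕜 X)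
    (g : Module.Dual 𝕜 X) (h : ∀ x, (∀ k, f k x ≤ 0) → g x ≤ 0) :
    ∃ α : Fin N → 𝕜, (∀ k, 0 ≤ α k) ∧ g = ∑ k, α k • f k := by
  induction N generalizing g with
  | zero => exact ⟨0, fun _ => le_rfl, by simpa using eq_zero_of_forall_nonpos fun x => h x nofun⟩
  | succ N ih =>
    by_cases hlast : ∀ x, (∀ k : Fin N, f k.castSucc x ≤ 0) → g x ≤ 0
    · obtain ⟨α, hα, hg⟩ := ih (fun k => f k.castSucc) g hlast
      exact _root_.exists_nonneg_eq_sum_smul_snoc hα le_rfl (by simpa using hg)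
    push Not at hlast
    obtain ⟨x₀, hx₀, hgx₀⟩ := hlast
    set ℓ := f (Fin.last N)
    have hℓx₀ : 0 < ℓ x₀ := by
      by_contra! hℓ
      exact (h x₀ (Fin.lastCases hℓ hx₀)).not_gt hgx₀
    set P := projAlong ℓ x₀
    obtain ⟨β, hβ, hgP⟩ := ih (fun k => f k.castSucc ∘ₗ P) (g ∘ₗ P) fun y hy =>
      h (P y) (Fin.lastCases (apply_projAlong hℓx₀.ne' y).le (by simpa using hy))
    set r := g - ∑ k, β k • f k.castSucc
    have hrP : r ∘ₗ P = 0 := by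
      ext y
      simpa [r, sum_apply, sub_eq_zero] using congr($hgP y)
    have hrx₀ : 0 < r x₀ := by
      have := sum_smul_apply_nonpos hβ hx₀
      simp only [r, sub_apply]
      linarith
    refine _root_.exists_nonneg_eq_sum_smul_snoc hβ (by positivity : 0 ≤ (ℓ x₀)⁻¹ * r x₀) ?_
    have hr := eq_comp_projAlong_add r ℓ x₀
    rw [hrP, zero_add] at hr
    rw [← hr, add_sub_cancel]

end LinearMap

theorem stmt2 (X : Type*) [SeminormedAddCommGroup X] [NormedSpace ℝ X]
    (N : ℕ) (f : Fin N → (X →L[ℝ] ℝ)) (g : X →L[ℝ] ℝ) :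
    (⋂ k, {x : X | f k x ≤ 0}) ⊆ {x : X | g x ≤ 0} ↔
      ∃ α : Fin N → ℝ, (∀ k, 0 ≤ α k) ∧ g = ∑ k, α k • f k := by
  simp only [Set.subset_def, Set.mem_iInter, Set.mem_ofPred_eq]
  constructor
  · intro h
    obtain ⟨α, hα, hg⟩ :=
      LinearMap.exists_nonneg_eq_sum_smul_of_forall_nonpos (fun k => (f k : X →ₗ[ℝ] ℝ)) g h
    refine ⟨α, hα, ContinuousLinearMap.coe_injective ?_⟩
    simpa using hg
  · rintro ⟨α, hα, rfl⟩ x hx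
    simpa using LinearMap.sum_smul_apply_nonpos (f := fun k => (f k : X →ₗ[ℝ] ℝ)) hα hx
end

section
/- Let X be a real vector space, p₁, …, p_N : X → ℝ polyhedral (finitely generated) sublinear functionals, p : X → ℝ a sublinear functional, and u₁, …, u_N, v ∈ ℝ such that the system p_k(x) ≤ u_k (k = 1, …, N) is consistent. Then {x : p x ≥ v} ⊇ ⋂_{k=1}^N {x : p_k x ≤ u_k} if and only if there exist α₁, …, α_N ≥ 0 such that p(x) + ∑_{k=1}^N α_k p_k(x) ≥ 0 for all x ∈ X and ∑_{k=1}^N α_k u_k ≤ −v. -/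
/-!
Hahn–Banach, in the Mazur–Orlicz form, pushes the inequality `v ≤ p` on the convex set
`C = ⋂ k, {P k ≤ u k}` down to a linear functional `f ≤ p` with `v ≤ f` on `C`. Writing each
`P k` as a maximum of linear functionals presents `C` as a polyhedron, and the inhomogeneous
Farkas lemma writes `-f` as a nonnegative combination of these linear pieces with the right bound
on the constants; regrouping the pieces by `k` gives the `α k`. The Farkas lemma is proved
algebraically, by induction on the number of constraints, so no finite-dimensionality or topology
enters.
-/

/-- A functional is sublinear if it is subadditive and positively homogeneous. -/
def IsSublinear {X : Type*} [AddCommGroup X] [Module ℝ X] (p : X → ℝ) : Prop :=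
  (∀ x y : X, p (x + y) ≤ p x + p y) ∧ ∀ (t : ℝ), 0 ≤ t → ∀ x : X, p (t • x) = t * p x

/-- A functional is polyhedral if it is the maximum of finitely many linear functionals. -/
def IsPolyhedral {X : Type*} [AddCommGroup X] [Module ℝ X] (p : X → ℝ) : Prop :=
  ∃ (m : ℕ) (L : Fin (m + 1) → (X →ₗ[ℝ] ℝ)), ∀ x : X, p x = ⨆ i, L i x

open Finset
open scoped Pointwise

section Farkas

variable {𝕜 Z : Type*} [Field 𝕜] [LinearOrder 𝕜] [IsStrictOrderedRing 𝕜]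
  [AddCommGroup Z] [Module 𝕜 Z]

/-- If the constraint `A 0` cannot be dropped, some `z₀` satisfies the others with `F z₀ < 0`,
hence `A 0 z₀ < 0`; projecting along `z₀` onto `ker (A 0)` reduces to the remaining constraints. -/
theorem exists_nonneg_eq_sum_smul_of_forall_nonneg_fin :
    ∀ {n : ℕ} (A : Fin n → Z →ₗ[𝕜] 𝕜) (F : Z →ₗ[𝕜] 𝕜),
      (∀ z, (∀ i, 0 ≤ A i z) → 0 ≤ F z) → ∃ γ : Fin n → 𝕜, (∀ i, 0 ≤ γ i) ∧ F = ∑ i, γ i • A i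
  | 0, A, F, h => by
    refine ⟨0, fun _ => le_rfl, ?_⟩
    ext z
    have h₁ := h z finZeroElim
    have h₂ := h (-z) finZeroElim
    simp only [map_neg, Left.nonneg_neg_iff] at h₂
    simp [le_antisymm h₂ h₁]
  | n + 1, A, F, h => by
    by_cases hdrop : ∀ z, (∀ i : Fin n, 0 ≤ A i.succ z) → 0 ≤ F z
    · obtain ⟨γ, hγ, rfl⟩ := exists_nonneg_eq_sum_smul_of_forall_nonneg_fin _ F hdrop
      exact ⟨Fin.cons 0 γ, Fin.cases le_rfl hγ, by simp [Fin.sum_univ_succ]⟩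
    push Not at hdrop
    obtain ⟨z₀, hz₀, hFz₀⟩ := hdrop
    have hA₀ : A 0 z₀ < 0 := by
      by_contra! hA₀
      exact hFz₀.not_ge (h z₀ (Fin.cases hA₀ hz₀))
    let π : Z →ₗ[𝕜] Z := LinearMap.id - (A 0).smulRight ((A 0 z₀)⁻¹ • z₀)
    have hπ : ∀ z, π z = z - (A 0 z / A 0 z₀) • z₀ := fun z => by
      simp [π, div_eq_mul_inv, mul_smul]
    have hA₀π : ∀ z, A 0 (π z) = 0 := fun z => by
      rw [hπ, map_sub, map_smul, smul_eq_mul, div_mul_cancel₀ _ hA₀.ne, sub_self]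
    obtain ⟨μ, hμ, hFπ⟩ := exists_nonneg_eq_sum_smul_of_forall_nonneg_fin
      (fun i => A i.succ ∘ₗ π) (F ∘ₗ π) fun z hz => h (π z) (Fin.cases (hA₀π z).ge hz)
    have hcoeff : 0 ≤ (F z₀ - ∑ i, μ i * A i.succ z₀) / A 0 z₀ := by
      refine div_nonneg_of_nonpos ?_ hA₀.le
      linarith [sum_nonneg fun i (_ : i ∈ univ) => mul_nonneg (hμ i) (hz₀ i)]
    refine ⟨Fin.cons _ μ, Fin.cases hcoeff hμ, ?_⟩
    ext z
    have hz := LinearMap.congr_fun hFπ z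
    simp only [LinearMap.comp_apply, hπ, map_sub, map_smul, smul_eq_mul, LinearMap.sum_apply,
      LinearMap.smul_apply, mul_sub, sum_sub_distrib] at hz
    simp only [Fin.sum_univ_succ, LinearMap.add_apply, LinearMap.sum_apply,
      LinearMap.smul_apply, smul_eq_mul, Fin.cons_zero, Fin.cons_succ]
    have hS : ∑ i, μ i * (A 0 z / A 0 z₀ * A i.succ z₀) =
        A 0 z / A 0 z₀ * ∑ i, μ i * A i.succ z₀ := by
      rw [mul_sum]
      exact sum_congr rfl fun i _ => by ring
    rw [hS] at hz
    linear_combination hz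

theorem exists_nonneg_eq_sum_smul_of_forall_nonneg {ι : Type*} [Fintype ι]
    (A : ι → Z →ₗ[𝕜] 𝕜) (F : Z →ₗ[𝕜] 𝕜) (h : ∀ z, (∀ i, 0 ≤ A i z) → 0 ≤ F z) :
    ∃ γ : ι → 𝕜, (∀ i, 0 ≤ γ i) ∧ F = ∑ i, γ i • A i := by
  let e := Fintype.equivFin ι
  obtain ⟨γ, hγ, rfl⟩ := exists_nonneg_eq_sum_smul_of_forall_nonneg_fin (A ∘ e.symm) F
    fun z hz => h z fun i => by simpa using hz (e i)
  exact ⟨γ ∘ e, fun i => hγ (e i), by simp [← e.symm.sum_comp]⟩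

end Farkas

section AffineFarkas

variable {𝕜 X ι : Type*} [Field 𝕜] [LinearOrder 𝕜] [IsStrictOrderedRing 𝕜]
  [AddCommGroup X] [Module 𝕜 X] {M : ι → X →ₗ[𝕜] 𝕜} {w : ι → 𝕜} {f : X →ₗ[𝕜] 𝕜} {v : 𝕜}

theorem apply_nonneg_of_forall_apply_nonpos (hcons : ∃ x₀, ∀ i, M i x₀ ≤ w i)
    (h : ∀ x, (∀ i, M i x ≤ w i) → v ≤ f x) {x : X} (hx : ∀ i, M i x ≤ 0) : 0 ≤ f x := by
  obtain ⟨x₀, hx₀⟩ := hcons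
  by_contra! hfx
  -- far enough along the ray `x₀ + s • x` the functional `f` drops below `v`
  set s := (f x₀ - v + 1) / -f x
  have hs : 0 < s := div_pos (by linarith [h x₀ hx₀]) (neg_pos.mpr hfx)
  have hsf : s * f x = -(f x₀ - v + 1) := by
    rw [div_mul_eq_mul_div, div_eq_iff (neg_pos.mpr hfx).ne']
    ring
  have hray := h (x₀ + s • x) fun i => by
    simpa [map_add, map_smul] using add_le_of_le_of_nonpos (hx₀ i)
      (mul_nonpos_of_nonneg_of_nonpos hs.le (hx i))
  simp only [map_add, map_smul, smul_eq_mul, hsf] at hray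
  linarith

theorem mul_le_apply_of_forall_apply_le_mul (hcons : ∃ x₀, ∀ i, M i x₀ ≤ w i)
    (h : ∀ x, (∀ i, M i x ≤ w i) → v ≤ f x) {x : X} {t : 𝕜} (ht : 0 ≤ t)
    (hx : ∀ i, M i x ≤ t * w i) : t * v ≤ f x := by
  rcases ht.eq_or_lt with rfl | ht
  · simpa using apply_nonneg_of_forall_apply_nonpos hcons h fun i => by simpa using hx i
  · have hscaled := h (t⁻¹ • x) fun i => by
      rw [map_smul, smul_eq_mul, inv_mul_le_iff₀ ht]
      exact hx i
    rwa [map_smul, smul_eq_mul, le_inv_mul_iff₀ ht] at hscaled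

/-- Inhomogeneous Farkas lemma: homogenize, applying the homogeneous one on `X × 𝕜` to
`(x, t) ↦ t * w i - M i x` and `(x, t) ↦ t`. -/
theorem exists_nonneg_of_forall_apply_le_imp_le [Fintype ι] (hcons : ∃ x₀, ∀ i, M i x₀ ≤ w i)
    (h : ∀ x, (∀ i, M i x ≤ w i) → v ≤ f x) :
    ∃ γ : ι → 𝕜, (∀ i, 0 ≤ γ i) ∧ (∀ x, f x + ∑ i, γ i * M i x = 0) ∧ ∑ i, γ i * w i ≤ -v := by
  let A : Option ι → (X × 𝕜) →ₗ[𝕜] 𝕜 := fun o =>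
    o.elim (LinearMap.snd 𝕜 X 𝕜) fun i => w i • LinearMap.snd 𝕜 X 𝕜 - M i ∘ₗ LinearMap.fst 𝕜 X 𝕜
  let F : (X × 𝕜) →ₗ[𝕜] 𝕜 := f ∘ₗ LinearMap.fst 𝕜 X 𝕜 - v • LinearMap.snd 𝕜 X 𝕜
  obtain ⟨γ, hγ, hF⟩ := exists_nonneg_eq_sum_smul_of_forall_nonneg A F fun ⟨x, t⟩ hxt => by
    have hx : ∀ i, M i x ≤ t * w i := fun i => by
      simpa [A, mul_comm] using hxt (some i)
    have ht : 0 ≤ t := by simpa [A] using hxt none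
    simpa [F, mul_comm] using mul_le_apply_of_forall_apply_le_mul hcons h ht hx
  have hγF : ∀ x t, f x - v * t = γ none * t + ∑ i, γ (some i) * (w i * t - M i x) :=
    fun x t => by simpa [A, F, Fintype.sum_option] using LinearMap.congr_fun hF (x, t)
  refine ⟨fun i => γ (some i), fun i => hγ (some i), fun x => ?_, ?_⟩
  · simpa [add_eq_zero_iff_eq_neg] using hγF x 0
  · have := hγF 0 1
    simp only [map_zero, mul_one, sub_zero] at this
    linarith [hγ none]

end AffineFarkas

section MazurOrlicz

variable {X : Type*} [AddCommGroup X] [Module ℝ X] {p : X → ℝ}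

theorem IsSublinear.map_zero (hp : IsSublinear p) : p 0 = 0 := by
  simpa using hp.2 0 le_rfl 0

theorem IsSublinear.convexOn (hp : IsSublinear p) : ConvexOn ℝ Set.univ p := by
  refine ⟨convex_univ, fun x _ y _ a b ha hb _ => ?_⟩
  rw [smul_eq_mul, smul_eq_mul, ← hp.2 a ha, ← hp.2 b hb]
  exact hp.1 _ _

noncomputable def mazurOrliczMinorant (p : X → ℝ) (C : Set X) (v : ℝ) (x : X) : ℝ :=
  ⨅ z : {z : ℝ × X // 0 ≤ z.1 ∧ z.2 ∈ C}, p (x + z.1.1 • z.1.2) - z.1.1 * v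

variable {C : Set X} {v : ℝ}

theorem IsSublinear.neg_neg_le_sub (hp : IsSublinear p) (hv : ∀ y ∈ C, v ≤ p y) (x : X)
    {t : ℝ} (ht : 0 ≤ t) {y : X} (hy : y ∈ C) : -p (-x) ≤ p (x + t • y) - t * v := by
  have hsplit : p (t • y) ≤ p (x + t • y) + p (-x) := by
    simpa using hp.1 (x + t • y) (-x)
  rw [hp.2 t ht] at hsplit
  nlinarith [hv y hy]

theorem mazurOrliczMinorant_le (hp : IsSublinear p) (hv : ∀ y ∈ C, v ≤ p y) (x : X)
    {t : ℝ} (ht : 0 ≤ t) {y : X} (hy : y ∈ C) :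
    mazurOrliczMinorant p C v x ≤ p (x + t • y) - t * v :=
  ciInf_le ⟨-p (-x), by rintro _ ⟨⟨⟨t, y⟩, ht, hy⟩, rfl⟩; exact hp.neg_neg_le_sub hv x ht hy⟩
    (⟨(t, y), ht, hy⟩ : {z : ℝ × X // 0 ≤ z.1 ∧ z.2 ∈ C})

theorem le_mazurOrliczMinorant (hC : C.Nonempty) {x : X} {r : ℝ}
    (h : ∀ t, 0 ≤ t → ∀ y ∈ C, r ≤ p (x + t • y) - t * v) : r ≤ mazurOrliczMinorant p C v x :=
  have : Nonempty {z : ℝ × X // 0 ≤ z.1 ∧ z.2 ∈ C} := ⟨⟨(0, hC.some), le_rfl, hC.some_mem⟩⟩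
  le_ciInf fun z => h _ z.2.1 _ z.2.2

theorem mazurOrliczMinorant_le_self (hp : IsSublinear p) (hv : ∀ y ∈ C, v ≤ p y)
    (hC : C.Nonempty) (x : X) : mazurOrliczMinorant p C v x ≤ p x := by
  simpa using mazurOrliczMinorant_le hp hv x le_rfl hC.some_mem

theorem mazurOrliczMinorant_neg_le (hp : IsSublinear p) (hv : ∀ y ∈ C, v ≤ p y) {y : X}
    (hy : y ∈ C) : mazurOrliczMinorant p C v (-y) ≤ -v := by
  simpa [hp.map_zero] using mazurOrliczMinorant_le hp hv (-y) zero_le_one hy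

theorem mazurOrliczMinorant_zero_nonneg (hp : IsSublinear p) (hv : ∀ y ∈ C, v ≤ p y)
    (hC : C.Nonempty) : 0 ≤ mazurOrliczMinorant p C v 0 :=
  le_mazurOrliczMinorant hC fun _ ht _ hy => by
    simpa [hp.map_zero] using hp.neg_neg_le_sub hv 0 ht hy

theorem mazurOrliczMinorant_add_le (hp : IsSublinear p) (hv : ∀ y ∈ C, v ≤ p y)
    (hC : C.Nonempty) (hCc : Convex ℝ C) (x x' : X) :
    mazurOrliczMinorant p C v (x + x') ≤
      mazurOrliczMinorant p C v x + mazurOrliczMinorant p C v x' := by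
  have : Nonempty {z : ℝ × X // 0 ≤ z.1 ∧ z.2 ∈ C} := ⟨⟨(0, hC.some), le_rfl, hC.some_mem⟩⟩
  refine le_ciInf_add_ciInf fun ⟨⟨t, y⟩, ht, hy⟩ ⟨⟨t', y'⟩, ht', hy'⟩ => ?_
  -- `t • y + t' • y' ∈ t • C + t' • C = (t + t') • C` by convexity
  obtain ⟨z, hz, hzyy' : (t + t') • z = t • y + t' • y'⟩ : t • y + t' • y' ∈ (t + t') • C := by
    rw [hCc.add_smul ht ht']
    exact Set.add_mem_add (Set.smul_mem_smul_set hy) (Set.smul_mem_smul_set hy')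
  calc mazurOrliczMinorant p C v (x + x')
      ≤ p (x + x' + (t + t') • z) - (t + t') * v :=
        mazurOrliczMinorant_le hp hv _ (add_nonneg ht ht') hz
    _ = p ((x + t • y) + (x' + t' • y')) - (t * v + t' * v) := by
        rw [hzyy', add_add_add_comm, add_mul]
    _ ≤ _ := by linarith [hp.1 (x + t • y) (x' + t' • y')]

theorem mazurOrliczMinorant_smul_le (hp : IsSublinear p) (hv : ∀ y ∈ C, v ≤ p y)
    (hC : C.Nonempty) {c : ℝ} (hc : 0 < c) (x : X) :
    mazurOrliczMinorant p C v (c • x) ≤ c * mazurOrliczMinorant p C v x := by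
  rw [← div_le_iff₀' hc]
  refine le_mazurOrliczMinorant hC fun t ht y hy => ?_
  have := mazurOrliczMinorant_le hp hv (c • x) (mul_nonneg hc.le ht) hy
  rw [mul_smul, ← smul_add, hp.2 c hc.le, mul_assoc, ← mul_sub] at this
  rwa [div_le_iff₀' hc]

theorem mazurOrliczMinorant_smul (hp : IsSublinear p) (hv : ∀ y ∈ C, v ≤ p y)
    (hC : C.Nonempty) {c : ℝ} (hc : 0 < c) (x : X) :
    mazurOrliczMinorant p C v (c • x) = c * mazurOrliczMinorant p C v x := by
  refine (mazurOrliczMinorant_smul_le hp hv hC hc x).antisymm ?_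
  have := mazurOrliczMinorant_smul_le hp hv hC (inv_pos.mpr hc) (c • x)
  rwa [inv_smul_smul₀ hc.ne', ← div_eq_inv_mul, le_div_iff₀' hc] at this

/-- **Mazur–Orlicz**: a linear functional below `p` that still dominates `v` on `C`, obtained
by Hahn–Banach below the sublinear minorant `mazurOrliczMinorant p C v`. -/
theorem exists_linearMap_le_of_forall_le (hp : IsSublinear p) (hv : ∀ y ∈ C, v ≤ p y)
    (hC : C.Nonempty) (hCc : Convex ℝ C) :
    ∃ f : X →ₗ[ℝ] ℝ, (∀ x, f x ≤ p x) ∧ ∀ y ∈ C, v ≤ f y := by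
  obtain ⟨f, -, hf⟩ := exists_extension_of_le_sublinear ⊥ (mazurOrliczMinorant p C v)
    (fun c hc => mazurOrliczMinorant_smul hp hv hC hc) (mazurOrliczMinorant_add_le hp hv hC hCc)
    fun ⟨x, hx⟩ => by
      obtain rfl := (Submodule.mem_bot ℝ).mp hx
      exact mazurOrliczMinorant_zero_nonneg hp hv hC
  refine ⟨f, fun x => (hf x).trans (mazurOrliczMinorant_le_self hp hv hC x), fun y hy => ?_⟩
  have := (hf (-y)).trans (mazurOrliczMinorant_neg_le hp hv hy)
  rw [map_neg] at this
  linarith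

end MazurOrlicz

section Polyhedral

variable {X : Type*} [AddCommGroup X] [Module ℝ X]

theorem apply_le_of_forall_eq_iSup {m : ℕ} {P : X → ℝ} {L : Fin (m + 1) → X →ₗ[ℝ] ℝ}
    (hL : ∀ x, P x = ⨆ i, L i x) (i : Fin (m + 1)) (x : X) : L i x ≤ P x := by
  rw [hL x]
  exact le_ciSup (Set.finite_range fun i => L i x).bddAbove i

theorem le_iff_forall_apply_le_of_forall_eq_iSup {m : ℕ} {P : X → ℝ}
    {L : Fin (m + 1) → X →ₗ[ℝ] ℝ} (hL : ∀ x, P x = ⨆ i, L i x) (x : X) (r : ℝ) :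
    P x ≤ r ↔ ∀ i, L i x ≤ r := by
  rw [hL x]
  exact ciSup_le_iff (Set.finite_range fun i => L i x).bddAbove

theorem exists_nonneg_of_forall_le_imp_le_of_isPolyhedral {ι : Type*} [Fintype ι]
    {P : ι → X → ℝ} {u : ι → ℝ} {f : X →ₗ[ℝ] ℝ} {v : ℝ} (hP : ∀ k, IsPolyhedral (P k))
    (hcons : ∃ x, ∀ k, P k x ≤ u k) (h : ∀ x, (∀ k, P k x ≤ u k) → v ≤ f x) :
    ∃ α : ι → ℝ, (∀ k, 0 ≤ α k) ∧ (∀ x, 0 ≤ f x + ∑ k, α k * P k x) ∧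
      ∑ k, α k * u k ≤ -v := by
  choose m L hL using hP
  have hiff : ∀ x, (∀ j : Σ k, Fin (m k + 1), L j.1 j.2 x ≤ u j.1) ↔ ∀ k, P k x ≤ u k :=
    fun x => by simp [Sigma.forall, le_iff_forall_apply_le_of_forall_eq_iSup (hL _)]
  obtain ⟨γ, hγ, hγf, hγu⟩ := exists_nonneg_of_forall_apply_le_imp_le
    (ι := Σ k, Fin (m k + 1)) (M := fun j => L j.1 j.2) (w := fun j => u j.1)
    (by simpa only [hiff] using hcons) fun x hx => h x ((hiff x).1 hx)
  refine ⟨fun k => ∑ i, γ ⟨k, i⟩, fun k => sum_nonneg fun i _ => hγ _, fun x => ?_, ?_⟩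
  · calc 0 = f x + ∑ k, ∑ i, γ ⟨k, i⟩ * L k i x := by rw [← hγf x, Fintype.sum_sigma]
      _ ≤ f x + ∑ k, ∑ i, γ ⟨k, i⟩ * P k x := by
        gcongr with k _ i
        · exact hγ _
        · exact apply_le_of_forall_eq_iSup (hL k) i x
      _ = f x + ∑ k, (∑ i, γ ⟨k, i⟩) * P k x := by simp only [sum_mul]
  · simpa only [sum_mul, Fintype.sum_sigma] using hγu

end Polyhedral

theorem stmt6 (X : Type*) [AddCommGroup X] [Module ℝ X]
    (N : ℕ) (p : X → ℝ) (P : Fin N → X → ℝ) (u : Fin N → ℝ) (v : ℝ)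
    (hp : IsSublinear p)
    (hP : ∀ k, IsSublinear (P k) ∧ IsPolyhedral (P k))
    (hcons : ∃ x : X, ∀ k, P k x ≤ u k) :
    (⋂ k, {x : X | P k x ≤ u k}) ⊆ {x : X | v ≤ p x} ↔
      ∃ α : Fin N → ℝ, (∀ k, 0 ≤ α k) ∧
        (∀ x : X, 0 ≤ p x + ∑ k, α k * P k x) ∧
        ∑ k, α k * u k ≤ -v := by
  constructor
  · intro hsub
    have hconvex : Convex ℝ (⋂ k, {x : X | P k x ≤ u k}) :=
      convex_iInter fun k => by simpa using (hP k).1.convexOn.convex_le (u k)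
    obtain ⟨f, hfp, hfC⟩ := exists_linearMap_le_of_forall_le hp (fun y hy => hsub hy)
      (let ⟨x, hx⟩ := hcons; ⟨x, Set.mem_iInter.2 hx⟩) hconvex
    obtain ⟨α, hα, hαf, hαu⟩ := exists_nonneg_of_forall_le_imp_le_of_isPolyhedral
      (fun k => (hP k).2) hcons fun x hx => hfC x (Set.mem_iInter.2 hx)
    exact ⟨α, hα, fun x => (hαf x).trans (by linarith [hfp x]), hαu⟩
  · rintro ⟨α, hα, hpα, hαu⟩ x hx
    rw [Set.mem_ofPred_eq]
    have hPu := sum_le_sum fun k (_ : k ∈ univ) =>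
      mul_le_mul_of_nonneg_left (Set.mem_iInter.1 hx k) (hα k)
    linarith [hpα x]
end

section
/- Let X be a real vector space, p₁, …, p_N : X → ℝ polyhedral sublinear functionals, and p : X → ℝ sublinear. If {x : p x ≥ 0} ⊇ ⋂_{k=1}^N {x : p_k x ≤ 0}, then there exist α₁, …, α_N ≥ 0 such that p(x) + ∑_{k=1}^N α_k p_k(x) ≥ 0 for all x ∈ X. -/
section

variable {X Y : Type*} [AddCommGroup X] [Module ℝ X] [AddCommGroup Y] [Module ℝ Y]

lemma LinearMap.isSublinear (g : X →ₗ[ℝ] ℝ) : IsSublinear g :=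
  ⟨fun x y => (map_add g x y).le, fun t _ x => by rw [map_smul, smul_eq_mul]⟩

lemma LinearMap.eq_zero_of_forall_nonneg (g : X →ₗ[ℝ] ℝ) (hg : ∀ x, 0 ≤ g x) (x : X) :
    g x = 0 :=
  le_antisymm (by simpa using hg (-x)) (hg x)

namespace IsSublinear

variable {p : X → ℝ}

lemma add_linearMap (hp : IsSublinear p) (g : X →ₗ[ℝ] ℝ) :
    IsSublinear (fun x => p x + g x) := by
  refine ⟨fun x y => ?_, fun t ht x => ?_⟩
  · linarith [hp.1 x y, map_add g x y]
  · simp only [hp.2 t ht x, map_smul, smul_eq_mul, mul_add]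

lemma add_sum {ι : Type*} [Fintype ι] (hp : IsSublinear p) (c : ι → ℝ) (L : ι → X →ₗ[ℝ] ℝ) :
    IsSublinear (fun x => p x + ∑ i, c i * L i x) := by
  simpa using hp.add_linearMap (∑ i, c i • L i)

lemma comp_linearMap (hp : IsSublinear p) (f : Y →ₗ[ℝ] X) : IsSublinear (p ∘ f) :=
  ⟨fun x y => by simpa using hp.1 (f x) (f y), fun t ht x => by simpa using hp.2 t ht (f x)⟩

/-- Hahn–Banach: extend `0` from `⋂ ker Lᵢ` to a linear minorant of `p`, which then lies in the
span of the `Lᵢ`. -/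
lemma exists_add_sum_nonneg_of_nonneg_on_iInf_ker {ι : Type*} [Fintype ι] (hp : IsSublinear p)
    (L : ι → X →ₗ[ℝ] ℝ) (h : ∀ x ∈ ⨅ i, LinearMap.ker (L i), 0 ≤ p x) :
    ∃ c : ι → ℝ, ∀ x, 0 ≤ p x + ∑ i, c i * L i x := by
  obtain ⟨g, hg0, hgp⟩ := exists_extension_of_le_sublinear
    ⟨⨅ i, LinearMap.ker (L i), 0⟩ p (fun t ht x => hp.2 t ht.le x) hp.1
    (fun x => by simpa using h x x.2)
  have hker : ⨅ i, LinearMap.ker (L i) ≤ LinearMap.ker g := fun x hx => by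
    simpa using hg0 ⟨x, hx⟩
  obtain ⟨c, rfl⟩ :=
    (Submodule.mem_span_range_iff_exists_fun ℝ).1 (mem_span_of_iInf_ker_le_ker hker)
  refine ⟨-c, fun x => ?_⟩
  have := hgp x
  simp only [LinearMap.sum_apply, LinearMap.smul_apply, smul_eq_mul] at this
  simp only [Pi.neg_apply, neg_mul, Finset.sum_neg_distrib]
  linarith

/-- `α` is squeezed between `-p u / M u` (`M u > 0`) and `p v / -M v` (`M v < 0`), the ordering
coming from `p ≥ 0` at `(-M v) • u + M u • v`. -/
lemma exists_nonneg_add_mul_nonneg_on_cone (hp : IsSublinear p) (M : X →ₗ[ℝ] ℝ)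
    (C : PointedCone ℝ X) {e : X} (heC : e ∈ C) (hMe : M e < 0)
    (h : ∀ x ∈ C, M x ≤ 0 → 0 ≤ p x) :
    ∃ α, 0 ≤ α ∧ ∀ x ∈ C, 0 ≤ p x + α * M x := by
  have key : ∀ u ∈ C, ∀ v ∈ C, 0 < M u → M v < 0 → -p u / M u ≤ p v / -M v := by
    intro u hu v hv hMu hMv
    have hw : (-M v) • u + M u • v ∈ C :=
      C.add_mem (C.smul_mem (by linarith) hu) (C.smul_mem hMu.le hv)
    have h0 := h _ hw (by simp only [map_add, map_smul, smul_eq_mul]; linarith)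
    have h1 := hp.1 ((-M v) • u) (M u • v)
    rw [hp.2 _ (by linarith) u, hp.2 _ hMu.le v] at h1
    rw [div_le_div_iff₀ hMu (by linarith)]
    linarith
  set S := (fun u => -p u / M u) '' {u ∈ C | 0 < M u}
  have hS : BddAbove S := ⟨p e / -M e, by
    rintro _ ⟨u, ⟨hu, hMu⟩, rfl⟩; exact key u hu e heC hMu hMe⟩
  refine ⟨max 0 (sSup S), le_max_left _ _, fun x hx => ?_⟩
  rcases lt_trichotomy (M x) 0 with hMx | hMx | hMx
  · have hpx := h x hx hMx.le
    have : max 0 (sSup S) ≤ p x / -M x := max_le (div_nonneg hpx (by linarith)) <|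
      Real.sSup_le (by rintro _ ⟨u, ⟨hu, hMu⟩, rfl⟩; exact key u hu x hx hMu hMx)
        (div_nonneg hpx (by linarith))
    rw [le_div_iff₀ (by linarith)] at this
    linarith
  · simpa [hMx] using h x hx hMx.le
  · have : -p x / M x ≤ max 0 (sSup S) :=
      (le_csSup hS ⟨x, ⟨hx, hMx⟩, rfl⟩).trans (le_max_right _ _)
    rw [div_le_iff₀ hMx] at this
    linarith

/-- After extending the certificate from `⋂ ker (δᵢ • Lᵢ)` to `X`, adding a large multiple of
`M + ∑ δᵢ Lᵢ = 0` makes all coefficients nonnegative. -/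
lemma exists_nonneg_of_eq_neg_sum {ι : Type*} [Fintype ι] (hp : IsSublinear p)
    (M : X →ₗ[ℝ] ℝ) (L : ι → X →ₗ[ℝ] ℝ) {δ β : ι → ℝ} (hδ : ∀ i, 0 ≤ δ i)
    (hMδ : ∀ x, M x + ∑ i, δ i * L i x = 0) (hβ0 : ∀ i, 0 ≤ β i)
    (hβ : ∀ x ∈ ⨅ i, LinearMap.ker (δ i • L i), 0 ≤ p x + ∑ i, β i * L i x) :
    ∃ γ₀, 0 ≤ γ₀ ∧ ∃ γ : ι → ℝ, (∀ i, 0 ≤ γ i) ∧ ∀ x, 0 ≤ p x + γ₀ * M x + ∑ i, γ i * L i x := by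
  obtain ⟨c, hc⟩ := (hp.add_sum β L).exists_add_sum_nonneg_of_nonneg_on_iInf_ker _ hβ
  set R := ∑ i, |c i|
  have hcR : ∀ i, 0 ≤ c i + R := fun i => by
    linarith [neg_abs_le (c i), Finset.single_le_sum (fun j _ => abs_nonneg (c j))
      (Finset.mem_univ i)]
  refine ⟨R, Finset.sum_nonneg fun i _ => abs_nonneg _, fun i => β i + (c i + R) * δ i,
    fun i => add_nonneg (hβ0 i) (mul_nonneg (hcR i) (hδ i)), fun x => ?_⟩
  have hsplit : ∑ i, (β i + (c i + R) * δ i) * L i x =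
      ∑ i, β i * L i x + ∑ i, c i * (δ i • L i) x + R * ∑ i, δ i * L i x := by
    simp only [Finset.mul_sum, ← Finset.sum_add_distrib, LinearMap.smul_apply, smul_eq_mul]
    exact Finset.sum_congr rfl fun i _ => by ring
  have hR : R * M x + R * ∑ i, δ i * L i x = 0 := by rw [← mul_add, hMδ x, mul_zero]
  linarith [hc x]

lemma exists_nonneg_add_sum_nonneg_of_fin {m : ℕ} (hp : IsSublinear p) (L : Fin m → X →ₗ[ℝ] ℝ)
    (h : ∀ x, (∀ i, L i x ≤ 0) → 0 ≤ p x) :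
    ∃ β : Fin m → ℝ, (∀ i, 0 ≤ β i) ∧ ∀ x, 0 ≤ p x + ∑ i, β i * L i x := by
  induction m generalizing X with
  | zero => exact ⟨0, fun _ => le_rfl, fun x => by simpa using h x finZeroElim⟩
  | succ m ih =>
    suffices ∃ γ₀, 0 ≤ γ₀ ∧ ∃ γ : Fin m → ℝ, (∀ i, 0 ≤ γ i) ∧
        ∀ x, 0 ≤ p x + γ₀ * L 0 x + ∑ i, γ i * L i.succ x by
      obtain ⟨γ₀, hγ₀, γ, hγ, hγp⟩ := this
      exact ⟨Fin.cons γ₀ γ, Fin.cases hγ₀ hγ, fun x => by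
        simpa [Fin.sum_univ_succ, add_assoc] using hγp x⟩
    set C := PointedCone.dual (LinearMap.id : Module.Dual ℝ X →ₗ[ℝ] Module.Dual ℝ X)
      (Set.range fun i : Fin m => -L i.succ)
    have hC : ∀ x, x ∈ C ↔ ∀ i : Fin m, L i.succ x ≤ 0 := by simp [C]
    have hpC : ∀ x ∈ C, L 0 x ≤ 0 → 0 ≤ p x := fun x hx hx0 =>
      h x (Fin.cases hx0 ((hC x).1 hx))
    by_cases hslack : ∃ e ∈ C, L 0 e < 0
    · obtain ⟨e, heC, he⟩ := hslack
      obtain ⟨α, hα, hαp⟩ := hp.exists_nonneg_add_mul_nonneg_on_cone (L 0) C heC he hpC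
      obtain ⟨β, hβ, hβp⟩ := ih (hp.add_linearMap (α • L 0)) (fun i => L i.succ)
        (fun x hx => by simpa using hαp x ((hC x).2 hx))
      exact ⟨α, hα, β, hβ, fun x => by simpa using hβp x⟩
    · push Not at hslack
      obtain ⟨δ, hδ, hδM⟩ := ih (L 0).isSublinear (fun i => L i.succ)
        (fun x hx => hslack x ((hC x).2 hx))
      have hMδ := (L 0 + ∑ i : Fin m, δ i • L i.succ).eq_zero_of_forall_nonneg (by simpa using hδM)
      simp only [LinearMap.add_apply, LinearMap.sum_apply, LinearMap.smul_apply,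
        smul_eq_mul] at hMδ
      set K := ⨅ i : Fin m, LinearMap.ker (δ i • L i.succ)
      have hK : ∀ x ∈ K, L 0 x = 0 := fun x hx => by
        have hx0 : ∀ i : Fin m, δ i * L i.succ x = 0 := by simpa [K, Submodule.mem_iInf] using hx
        linarith [hMδ x, Finset.sum_eq_zero fun i (_ : i ∈ Finset.univ) => hx0 i]
      obtain ⟨β, hβ, hβp⟩ := ih (hp.comp_linearMap K.subtype) (fun i => L i.succ ∘ₗ K.subtype)
        (fun x hx => hpC x ((hC x).2 hx) (hK x x.2).le)
      exact hp.exists_nonneg_of_eq_neg_sum (L 0) _ hδ hMδ hβ fun x hx => hβp ⟨x, hx⟩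

lemma exists_nonneg_add_sum_nonneg {ι : Type*} [Fintype ι] (hp : IsSublinear p)
    (L : ι → X →ₗ[ℝ] ℝ) (h : ∀ x, (∀ i, L i x ≤ 0) → 0 ≤ p x) :
    ∃ β : ι → ℝ, (∀ i, 0 ≤ β i) ∧ ∀ x, 0 ≤ p x + ∑ i, β i * L i x := by
  let e := Fintype.equivFin ι
  obtain ⟨β, hβ, hβp⟩ := hp.exists_nonneg_add_sum_nonneg_of_fin (L ∘ e.symm)
    fun x hx => h x fun i => by simpa using hx (e i)
  refine ⟨β ∘ e, fun i => hβ (e i), fun x => ?_⟩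
  simpa [← e.symm.sum_comp] using hβp x

end IsSublinear

end

theorem stmt7 (X : Type*) [AddCommGroup X] [Module ℝ X]
    (N : ℕ) (p : X → ℝ) (P : Fin N → X → ℝ)
    (hp : IsSublinear p)
    (hP : ∀ k, IsSublinear (P k) ∧ IsPolyhedral (P k))
    (h : (⋂ k, {x : X | P k x ≤ 0}) ⊆ {x : X | 0 ≤ p x}) :
    ∃ α : Fin N → ℝ, (∀ k, 0 ≤ α k) ∧
      ∀ x : X, 0 ≤ p x + ∑ k, α k * P k x := by
  choose m L hL using fun k => (hP k).2
  obtain ⟨β, hβ, hβp⟩ := hp.exists_nonneg_add_sum_nonneg (fun s : Σ k, Fin (m k + 1) => L s.1 s.2)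
    fun x hx => h <| Set.mem_iInter.2 fun k => by
      simpa [hL k x] using ciSup_le fun i => hx ⟨k, i⟩
  refine ⟨fun k => ∑ i, β ⟨k, i⟩, fun k => Finset.sum_nonneg fun i _ => hβ _, fun x => ?_⟩
  have hLP : ∀ k i, L k i x ≤ P k x := fun k i =>
    hL k x ▸ le_ciSup (Finite.bddAbove_range fun i => L k i x) i
  calc 0 ≤ p x + ∑ s : Σ k, Fin (m k + 1), β s * L s.1 s.2 x := hβp x
    _ = p x + ∑ k, ∑ i, β ⟨k, i⟩ * L k i x := by rw [Fintype.sum_sigma]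
    _ ≤ p x + ∑ k, (∑ i, β ⟨k, i⟩) * P k x := by
      gcongr with k
      rw [Finset.sum_mul]
      gcongr with i
      exacts [hβ _, hLP k i]
end

section
/- Let X be a real seminormed vector space, f₁, …, f_N, g bounded linear functionals, and u₁, …, u_N, v ∈ ℝ such that the system f_k(x) ≤ u_k (k = 1, …, N) is consistent. Then {x : g x ≤ v} ⊇ ⋂_{k=1}^N {x : f_k x ≤ u_k} if and only if there exist α₁, …, α_N ≥ 0 with g = ∑_{k=1}^N α_k • f_k and ∑_{k=1}^N α_k u_k ≤ v. -/
/-!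
Homogenize: on `E × 𝕜` the functionals `(x, t) ↦ f k x - u k * t`, `(x, t) ↦ -t` and
`(x, t) ↦ g x - v * t` satisfy "all of the former `≤ 0` implies the latter `≤ 0`". For `t > 0`
this is the hypothesis after scaling by `t⁻¹`; for `t = 0` it holds because `x` is then a
recession direction of the (nonempty) feasible set. The homogeneous Farkas lemma, valid in any
vector space over an ordered field, then writes the last functional as a nonnegative combination
of the others, and evaluating at `(x, 0)` and `(0, 1)` gives `g = ∑ α k • f k` and
`∑ α k * u k ≤ v`.

The homogeneous Farkas lemma is proved by Fourier–Motzkin elimination: if the constraint `F a`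
cannot be dropped, some `z` satisfies the other constraints with `G z > 0`, hence `F a z > 0`;
composing everything with the projection onto `ker (F a)` along `z` removes `F a`, and the
induction hypothesis for the projected system lifts back with a nonnegative coefficient on `F a`.
-/

open Finset

namespace LinearMap

section Field

variable {𝕜 E : Type*} [Field 𝕜] [AddCommGroup E] [Module 𝕜 E]

def projKerAlong (ℓ : E →ₗ[𝕜] 𝕜) (z : E) : E →ₗ[𝕜] E :=
  LinearMap.id - (ℓ z)⁻¹ • ℓ.smulRight z

theorem apply_projKerAlong {ℓ : E →ₗ[𝕜] 𝕜} {z : E} (hz : ℓ z ≠ 0) (y : E) :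
    ℓ (projKerAlong ℓ z y) = 0 := by
  simp only [projKerAlong, sub_apply, id_coe, id_eq, smul_apply, coe_smulRight, map_sub,
    map_smul, smul_eq_mul]
  field_simp
  ring

theorem comp_projKerAlong (φ ℓ : E →ₗ[𝕜] 𝕜) (z : E) :
    φ ∘ₗ projKerAlong ℓ z = φ - (φ z / ℓ z) • ℓ := by
  ext y
  simp [projKerAlong]
  ring

def homogenize (φ : E →ₗ[𝕜] 𝕜) (c : 𝕜) : E × 𝕜 →ₗ[𝕜] 𝕜 :=
  φ ∘ₗ fst 𝕜 E 𝕜 - c • snd 𝕜 E 𝕜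

@[simp]
theorem homogenize_apply (φ : E →ₗ[𝕜] 𝕜) (c : 𝕜) (p : E × 𝕜) :
    homogenize φ c p = φ p.1 - c * p.2 := rfl

end Field

variable {𝕜 E ι : Type*} [Field 𝕜] [LinearOrder 𝕜] [IsStrictOrderedRing 𝕜]
  [AddCommGroup E] [Module 𝕜 E]

theorem eq_zero_of_forall_apply_nonpos {G : E →ₗ[𝕜] 𝕜} (h : ∀ y, G y ≤ 0) : G = 0 := by
  ext y
  have := h (-y)
  simp only [map_neg, neg_nonpos] at this
  exact le_antisymm (h y) this

theorem exists_nonneg_eq_sum_smul_of_forall_nonpos_s8 [DecidableEq ι]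
    (s : Finset ι) (F : ι → E →ₗ[𝕜] 𝕜) (G : E →ₗ[𝕜] 𝕜)
    (h : ∀ y, (∀ i ∈ s, F i y ≤ 0) → G y ≤ 0) :
    ∃ β : ι → 𝕜, (∀ i, 0 ≤ β i) ∧ G = ∑ i ∈ s, β i • F i := by
  induction s using Finset.induction_on generalizing F G with
  | empty =>
    exact ⟨0, fun _ => le_rfl, by simpa using eq_zero_of_forall_apply_nonpos (by simpa using h)⟩
  | insert a s ha ih =>
    suffices ∃ c : 𝕜, 0 ≤ c ∧ ∃ γ : ι → 𝕜, (∀ i, 0 ≤ γ i) ∧ G = c • F a + ∑ i ∈ s, γ i • F i by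
      obtain ⟨c, hc, γ, hγ, rfl⟩ := this
      refine ⟨Function.update γ a c, fun i => ?_, ?_⟩
      · rcases eq_or_ne i a with rfl | hi <;> simp [*]
      · rw [sum_insert ha, Function.update_self]
        congr 1
        exact sum_congr rfl fun i hi => by rw [Function.update_of_ne (ne_of_mem_of_not_mem hi ha)]
    by_cases hs : ∀ y, (∀ i ∈ s, F i y ≤ 0) → G y ≤ 0
    · obtain ⟨γ, hγ, hG⟩ := ih F G hs
      exact ⟨0, le_rfl, γ, hγ, by simpa using hG⟩
    push Not at hs
    obtain ⟨z, hzs, hGz⟩ := hs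
    have hza : 0 < F a z := by
      by_contra! hle
      exact hGz.not_ge (h z (by simpa [hle] using hzs))
    set P := projKerAlong (F a) z
    obtain ⟨γ, hγ, hGP⟩ := ih (fun i => F i ∘ₗ P) (G ∘ₗ P) fun y hy =>
      h (P y) (forall_mem_insert _ _ _ |>.2 ⟨(apply_projKerAlong hza.ne' y).le, hy⟩)
    simp only [P, comp_projKerAlong] at hGP
    refine ⟨(G z - ∑ i ∈ s, γ i * F i z) / F a z, ?_, γ, hγ, ?_⟩
    · have : ∑ i ∈ s, γ i * F i z ≤ 0 :=
        sum_nonpos fun i hi => mul_nonpos_of_nonneg_of_nonpos (hγ i) (hzs i hi)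
      exact div_nonneg (by linarith) hza.le
    · ext y
      have hGPy := congr($hGP y)
      have hsum : ∑ i ∈ s, γ i * (F i z / F a z * F a y)
          = (∑ i ∈ s, γ i * F i z) / F a z * F a y := by
        rw [sum_div, sum_mul]
        exact sum_congr rfl fun _ _ => by ring
      simp only [sub_apply, smul_apply, coe_sum, Finset.sum_apply, smul_eq_mul, mul_sub,
        sum_sub_distrib, hsum] at hGPy
      simp only [add_apply, smul_apply, coe_sum, Finset.sum_apply, smul_eq_mul]
      linear_combination hGPy

theorem apply_le_mul_of_forall_le_imp_le {f : ι → E →ₗ[𝕜] 𝕜} {g : E →ₗ[𝕜] 𝕜} {u : ι → 𝕜}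
    {v : 𝕜} {x₀ : E} (hx₀ : ∀ i, f i x₀ ≤ u i) (hsub : ∀ x, (∀ i, f i x ≤ u i) → g x ≤ v)
    {x : E} {t : 𝕜} (ht : 0 ≤ t) (hx : ∀ i, f i x ≤ t * u i) : g x ≤ t * v := by
  rcases ht.eq_or_lt with rfl | ht
  · simp only [zero_mul] at hx ⊢
    by_contra! hgx
    set s := (v - g x₀ + 1) / g x with hs_def
    have hs : 0 ≤ s := div_nonneg (by linarith [hsub x₀ hx₀]) hgx.le
    have hray := hsub (x₀ + s • x) fun i => by
      simp only [map_add, map_smul, smul_eq_mul]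
      linarith [hx₀ i, mul_nonpos_of_nonneg_of_nonpos hs (hx i)]
    simp only [map_add, map_smul, smul_eq_mul, hs_def, div_mul_cancel₀ _ hgx.ne'] at hray
    linarith
  · have := hsub (t⁻¹ • x) fun i => by
      rw [map_smul, smul_eq_mul, inv_mul_le_iff₀ ht]
      exact hx i
    rwa [map_smul, smul_eq_mul, inv_mul_le_iff₀ ht] at this

theorem forall_le_imp_le_iff_exists_nonneg_eq_sum_smul [Fintype ι] {f : ι → E →ₗ[𝕜] 𝕜}
    {g : E →ₗ[𝕜] 𝕜} {u : ι → 𝕜} {v : 𝕜} (hcons : ∃ x, ∀ i, f i x ≤ u i) :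
    (∀ x, (∀ i, f i x ≤ u i) → g x ≤ v) ↔
      ∃ α : ι → 𝕜, (∀ i, 0 ≤ α i) ∧ g = ∑ i, α i • f i ∧ ∑ i, α i * u i ≤ v := by
  classical
  refine ⟨fun hsub => ?_, ?_⟩
  · obtain ⟨x₀, hx₀⟩ := hcons
    let F (o : Option ι) : E × 𝕜 →ₗ[𝕜] 𝕜 := o.elim (homogenize 0 1) fun i => homogenize (f i) (u i)
    obtain ⟨β, hβ, hG⟩ := exists_nonneg_eq_sum_smul_of_forall_nonpos_s8 univ F (homogenize g v)
      fun p hp => by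
        have ht : 0 ≤ p.2 := by simpa [F] using hp none
        have := apply_le_mul_of_forall_le_imp_le hx₀ hsub ht fun i => by
          simpa [F, mul_comm] using hp (some i)
        simpa [mul_comm] using this
    have hGp (p : E × 𝕜) :
        g p.1 - v * p.2 = -(β none * p.2) + ∑ i, β (some i) * (f i p.1 - u i * p.2) := by
      simpa [F, Fintype.sum_option] using congr($hG p)
    refine ⟨fun i => β (some i), fun i => hβ _, ?_, ?_⟩
    · ext x
      simpa using hGp (x, 0)
    · have := hGp (0, 1)
      simp only [map_zero, mul_one, zero_sub, mul_neg, sum_neg_distrib] at this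
      linarith [hβ none]
  · rintro ⟨α, hα, rfl, hαu⟩ x hx
    calc (∑ i, α i • f i) x = ∑ i, α i * f i x := by simp
      _ ≤ ∑ i, α i * u i := sum_le_sum fun i _ => mul_le_mul_of_nonneg_left (hx i) (hα i)
      _ ≤ v := hαu

end LinearMap

theorem stmt8 (X : Type*) [SeminormedAddCommGroup X] [NormedSpace ℝ X]
    (N : ℕ) (f : Fin N → (X →L[ℝ] ℝ)) (g : X →L[ℝ] ℝ)
    (u : Fin N → ℝ) (v : ℝ)
    (hcons : ∃ x : X, ∀ k, f k x ≤ u k) :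
    (⋂ k, {x : X | f k x ≤ u k}) ⊆ {x : X | g x ≤ v} ↔
      ∃ α : Fin N → ℝ, (∀ k, 0 ≤ α k) ∧ g = ∑ k, α k • f k ∧
        ∑ k, α k * u k ≤ v := by
  have hcoe (α : Fin N → ℝ) :
      g = ∑ k, α k • f k ↔ (g : X →ₗ[ℝ] ℝ) = ∑ k, α k • (f k : X →ₗ[ℝ] ℝ) := by
    rw [← ContinuousLinearMap.coe_inj]
    simp
  simp only [hcoe, Set.subset_def, Set.mem_iInter, Set.mem_ofPred_eq]
  exact LinearMap.forall_le_imp_le_iff_exists_nonneg_eq_sum_smul hcons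
end

section
/- Let X be a complex seminormed vector space, f₁, …, f_N, g bounded ℂ-linear functionals on X, and u₁, …, u_N, v ∈ ℝ such that the system |f_k(x)| ≤ u_k (k = 1, …, N) is consistent. Then {x : |g x| ≤ v} ⊇ ⋂_{k=1}^N {x : |f_k x| ≤ u_k} if and only if there exist c₁, …, c_N ∈ ℂ with g = ∑_{k=1}^N c_k • f_k and ∑_{k=1}^N |c_k| u_k ≤ v. -/
/-!
Consistency forces `u k ≥ 0`. On the subspace `Y` cut out by the constraints with `u k = 0`,
rescale the remaining functionals to `f k / u k`; the hypothesis then says that `|g| ≤ v` on the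
unit ball of the seminorm `‖(f k y / u k)_k‖_∞`, hence `|g| ≤ v · ‖·‖_∞` after composing with this
map `Y → ℂᴺ`. By Hahn–Banach, `g` is the composite of a functional on `ℂᴺ` of sup-dual norm at
most `v`, and that norm is the `ℓ¹` norm of its coefficients. Finally, `g - ∑ c k • f k` vanishes
on `Y`, so it lies in the span of the `f k` with `u k = 0`, which adds nothing to `∑ |c k| u k`.
-/

open LinearMap Submodule

theorem exists_eq_sum_smul_of_forall_eq_zero {K X ι : Type*} [Field K] [AddCommGroup X]
    [Module K X] [Fintype ι] (f : ι → X →ₗ[K] K) (p : ι → Prop) [DecidablePred p]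
    (φ : X →ₗ[K] K) (h : ∀ x, (∀ k, p k → f k x = 0) → φ x = 0) :
    ∃ d : ι → K, φ = ∑ k, d k • f k ∧ ∀ k, ¬ p k → d k = 0 := by
  set w : ι → K := fun k => if p k then 1 else 0
  have hker : ⨅ k, ker (w k • f k) ≤ ker φ := fun x hx =>
    h x fun k hk => by simpa [w, hk] using (mem_iInf _).1 hx k
  obtain ⟨c, hc⟩ := (mem_span_range_iff_exists_fun K).1 (mem_span_of_iInf_ker_le_ker hker)
  exact ⟨fun k => c k * w k, by simp_rw [← hc, mul_smul], fun k hk => by simp [w, hk]⟩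

theorem LinearMap.apply_eq_sum_mul_apply_single {R ι : Type*} [CommSemiring R] [Fintype ι]
    [DecidableEq ι] (H : (ι → R) →ₗ[R] R) (z : ι → R) :
    H z = ∑ k, z k * H (Pi.single k 1) := by
  conv_lhs => rw [pi_eq_sum_univ' z]
  simp

section
variable {𝕜 X E : Type*} [RCLike 𝕜] [AddCommGroup X] [Module 𝕜 X]

open Filter Topology in
theorem LinearMap.norm_apply_le_mul_norm_of_norm_le_one [SeminormedAddCommGroup E]
    [NormedSpace 𝕜 E] {T : X →ₗ[𝕜] E} {g : X →ₗ[𝕜] 𝕜} {v : ℝ}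
    (h : ∀ x, ‖T x‖ ≤ 1 → ‖g x‖ ≤ v) (x : X) : ‖g x‖ ≤ v * ‖T x‖ := by
  have hscale : ∀ s > ‖T x‖, ‖g x‖ ≤ v * s := by
    intro s hs
    have hs0 : 0 < s := (norm_nonneg _).trans_lt hs
    have hx := h ((s : 𝕜)⁻¹ • x) (by
      rw [map_smul, norm_smul, norm_inv, RCLike.norm_ofReal, abs_of_pos hs0]
      exact inv_mul_le_one_of_le₀ hs.le hs0.le)
    rw [map_smul, norm_smul, norm_inv, RCLike.norm_ofReal, abs_of_pos hs0,
      inv_mul_le_iff₀ hs0] at hx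
    linarith
  exact ge_of_tendsto ((continuous_const_mul v).continuousWithinAt (s := Set.Ioi ‖T x‖))
    (eventually_nhdsWithin_of_forall hscale)

theorem LinearMap.exists_comp_eq_of_norm_le_one [SeminormedAddCommGroup E]
    [NormedSpace 𝕜 E] (T : X →ₗ[𝕜] E) (g : X →ₗ[𝕜] 𝕜) {v : ℝ}
    (h : ∀ x, ‖T x‖ ≤ 1 → ‖g x‖ ≤ v) :
    ∃ H : E →L[𝕜] 𝕜, ‖H‖ ≤ v ∧ (H : E →ₗ[𝕜] 𝕜) ∘ₗ T = g := by
  have hv : 0 ≤ v := by simpa using h 0 (by simp)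
  have hbound := T.norm_apply_le_mul_norm_of_norm_le_one h
  have hker : ker T ≤ ker g := fun x hx => by
    simpa [mem_ker.1 hx] using hbound x
  set h₀ : range T →ₗ[𝕜] 𝕜 := (ker T).liftQ g hker ∘ₗ T.quotKerEquivRange.symm
  have h₀_apply : ∀ x, h₀ ⟨T x, mem_range_self T x⟩ = g x := fun x => by simp [h₀]
  have h₀_bound : ∀ w, ‖h₀ w‖ ≤ v * ‖w‖ := by
    rintro ⟨_, x, rfl⟩
    rw [h₀_apply]
    exact hbound x
  obtain ⟨H, hH_ext, hH_norm⟩ := exists_extension_norm_eq _ (h₀.mkContinuous v h₀_bound)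
  refine ⟨H, hH_norm ▸ h₀.mkContinuous_norm_le hv h₀_bound, LinearMap.ext fun x => ?_⟩
  simpa [h₀_apply] using hH_ext ⟨T x, mem_range_self T x⟩

theorem ContinuousLinearMap.sum_norm_apply_single_le_opNorm {ι : Type*} [Fintype ι]
    [DecidableEq ι] (H : (ι → 𝕜) →L[𝕜] 𝕜) : ∑ k, ‖H (Pi.single k 1)‖ ≤ ‖H‖ := by
  set b : ι → 𝕜 := fun k => H (Pi.single k 1)
  set σ : ι → 𝕜 := fun k => star (b k) / ‖b k‖
  have hσ : ‖σ‖ ≤ 1 := (pi_norm_le_iff_of_nonneg zero_le_one).2 fun k => by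
    simpa [σ] using div_self_le_one ‖b k‖
  have hHσ : H σ = ((∑ k, ‖b k‖ : ℝ) : 𝕜) := by
    rw [← H.coe_coe, LinearMap.apply_eq_sum_mul_apply_single]
    push_cast
    refine Finset.sum_congr rfl fun k _ => ?_
    change star (b k) / _ * b k = _
    rw [div_mul_eq_mul_div, RCLike.star_def, RCLike.conj_mul, sq, mul_self_div_self]
  calc ∑ k, ‖b k‖ = ‖H σ‖ := by
        rw [hHσ, RCLike.norm_ofReal,
          abs_of_nonneg (Finset.sum_nonneg fun k _ => norm_nonneg (b k))]
    _ ≤ ‖H‖ * ‖σ‖ := H.le_opNorm σ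
    _ ≤ ‖H‖ := mul_le_of_le_one_right (norm_nonneg _) hσ

variable {ι : Type*} [Fintype ι]

theorem exists_eq_sum_smul_of_forall_norm_le_one (f : ι → X →ₗ[𝕜] 𝕜) (g : X →ₗ[𝕜] 𝕜) {v : ℝ}
    (h : ∀ x, (∀ k, ‖f k x‖ ≤ 1) → ‖g x‖ ≤ v) :
    ∃ b : ι → 𝕜, g = ∑ k, b k • f k ∧ ∑ k, ‖b k‖ ≤ v := by
  classical
  obtain ⟨H, hH, hHg⟩ := (LinearMap.pi f).exists_comp_eq_of_norm_le_one g fun x hx =>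
    h x fun k => (pi_norm_le_iff_of_nonneg zero_le_one).1 hx k
  refine ⟨fun k => H (Pi.single k 1), LinearMap.ext fun x => ?_,
    H.sum_norm_apply_single_le_opNorm.trans hH⟩
  rw [← hHg, LinearMap.comp_apply, LinearMap.apply_eq_sum_mul_apply_single]
  simp [mul_comm]

theorem exists_eq_sum_smul_of_forall_norm_le (f : ι → X →ₗ[𝕜] 𝕜) (g : X →ₗ[𝕜] 𝕜) {u : ι → ℝ}
    {v : ℝ} (hu : ∀ k, 0 ≤ u k) (h : ∀ x, (∀ k, ‖f k x‖ ≤ u k) → ‖g x‖ ≤ v) :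
    ∃ c : ι → 𝕜, g = ∑ k, c k • f k ∧ ∑ k, ‖c k‖ * u k ≤ v := by
  classical
  set Y : Submodule 𝕜 X := ⨅ k, ⨅ (_ : u k = 0), ker (f k)
  have mem_Y {y : X} : y ∈ Y ↔ ∀ k, u k = 0 → f k y = 0 := by simp [Y]
  -- For `u k = 0` the rescaled functional is `0⁻¹ • _ = 0`, harmless since `f k` vanishes on `Y`.
  obtain ⟨b, hgb, hb⟩ := exists_eq_sum_smul_of_forall_norm_le_one
    (fun k => ((u k : 𝕜))⁻¹ • f k ∘ₗ Y.subtype) (g ∘ₗ Y.subtype) fun y hy => h y fun k => by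
      rcases (hu k).eq_or_lt with hk | hk
      · simp [← hk, mem_Y.1 y.2 k hk.symm]
      · simpa [norm_smul, abs_of_pos hk, inv_mul_le_iff₀ hk] using hy k
  set c₀ : ι → 𝕜 := fun k => b k * ((u k : 𝕜))⁻¹
  obtain ⟨d, hd, hd_zero⟩ := exists_eq_sum_smul_of_forall_eq_zero f (fun k => u k = 0)
      (g - ∑ k, c₀ k • f k) fun x hx => by
    have := LinearMap.congr_fun hgb ⟨x, mem_Y.2 hx⟩
    simpa [c₀, mul_assoc, sub_eq_zero] using this
  refine ⟨c₀ + d, ?_, ?_⟩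
  · simp only [Pi.add_apply, add_smul, Finset.sum_add_distrib]
    exact sub_eq_iff_eq_add'.1 hd
  · refine (Finset.sum_le_sum fun k _ => ?_).trans hb
    rcases (hu k).eq_or_lt with hk | hk
    · simp [← hk]
    · simp [c₀, hd_zero k hk.ne', abs_of_pos hk, hk.ne']

theorem norm_apply_le_of_eq_sum_smul {f : ι → X →ₗ[𝕜] 𝕜} {g : X →ₗ[𝕜] 𝕜} {c : ι → 𝕜}
    {u : ι → ℝ} (hg : g = ∑ k, c k • f k) {x : X} (hx : ∀ k, ‖f k x‖ ≤ u k) :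
    ‖g x‖ ≤ ∑ k, ‖c k‖ * u k :=
  calc ‖g x‖ = ‖∑ k, c k * f k x‖ := by simp [hg]
    _ ≤ ∑ k, ‖c k * f k x‖ := norm_sum_le _ _
    _ ≤ ∑ k, ‖c k‖ * u k := Finset.sum_le_sum fun k _ => by
      rw [norm_mul]
      exact mul_le_mul_of_nonneg_left (hx k) (norm_nonneg _)

end

theorem stmt9 (X : Type*) [SeminormedAddCommGroup X] [NormedSpace ℂ X]
    (N : ℕ) (f : Fin N → (X →L[ℂ] ℂ)) (g : X →L[ℂ] ℂ)
    (u : Fin N → ℝ) (v : ℝ)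
    (hcons : ∃ x : X, ∀ k, ‖f k x‖ ≤ u k) :
    (⋂ k, {x : X | ‖f k x‖ ≤ u k}) ⊆ {x : X | ‖g x‖ ≤ v} ↔
      ∃ c : Fin N → ℂ, g = ∑ k, c k • f k ∧
        ∑ k, ‖c k‖ * u k ≤ v := by
  obtain ⟨x₀, hx₀⟩ := hcons
  have hu : ∀ k, 0 ≤ u k := fun k => (norm_nonneg _).trans (hx₀ k)
  have hcoe (c : Fin N → ℂ) :
      g = ∑ k, c k • f k ↔ (g : X →ₗ[ℂ] ℂ) = ∑ k, c k • (f k : X →ₗ[ℂ] ℂ) := by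
    rw [← ContinuousLinearMap.coe_inj]
    simp
  simp_rw [hcoe, Set.subset_def, Set.mem_iInter, Set.mem_ofPred_eq]
  exact ⟨exists_eq_sum_smul_of_forall_norm_le _ _ hu,
    fun ⟨c, hg, hc⟩ x hx => (norm_apply_le_of_eq_sum_smul hg hx).trans hc⟩
end

section
/- Let R₀ be a subgroup of ℝ (as an additive ordered group) with R₀ - ℝ₊ = ℝ₊ - R₀ = ℝ, and let h : R₀ → ℝ be an additive positive map (h(x) ≥ 0 whenever x ≥ 0, x ∈ R₀). Then h extends to an additive positive map h̄ : ℝ → ℝ. -/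
/-!
A positive additive map `h` on a subgroup `G` of `ℝ` is monotone. Fix `a ∈ G` with `a > 0`. For
`x ∈ G` and `n ∈ ℕ`, put `m = ⌊n x / a⌋`; then `m a ≤ n x < (m + 1) a`, so by monotonicity
`m h(a) ≤ n h(x) ≤ (m + 1) h(a)`, whence `n |a h(x) - h(a) x| ≤ a h(a)` for every `n`.
So `h(x) = (h(a) / a) x`, and multiplication by `h(a) / a ≥ 0` is the required extension.
-/

namespace AddMonoidHom

variable {G : AddSubgroup ℝ} {h : G →+ ℝ}

theorem monotone_of_map_nonneg (hpos : ∀ x : G, 0 ≤ (x : ℝ) → 0 ≤ h x) : Monotone h := by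
  intro x y hxy
  have := hpos (y - x) (by simpa using hxy)
  rw [map_sub] at this
  linarith

theorem int_mul_map_le_of_int_mul_le (hpos : ∀ x : G, 0 ≤ (x : ℝ) → 0 ≤ h x) {x y : G}
    {m n : ℤ} (hle : m * (x : ℝ) ≤ n * y) : m * h x ≤ n * h y := by
  have hsmul : m • x ≤ n • y := by simpa [← Subtype.coe_le_coe] using hle
  have := monotone_of_map_nonneg hpos hsmul
  simpa only [map_zsmul, zsmul_eq_mul] using this

theorem map_eq_div_mul (hpos : ∀ x : G, 0 ≤ (x : ℝ) → 0 ≤ h x) {a : G} (ha : 0 < (a : ℝ))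
    (x : G) : h x = h a / a * x := by
  set e := a * h x - h a * x
  have hha : 0 ≤ h a := hpos a ha.le
  have bound : ∀ n : ℕ, n * |e| ≤ a * h a := by
    intro n
    set m := ⌊n * (x : ℝ) / a⌋
    have hlow : m * (a : ℝ) ≤ (n : ℤ) * x := by
      push_cast
      exact (le_div_iff₀ ha).1 (Int.floor_le _)
    have hupp : ((n : ℤ) : ℝ) * x ≤ (m + 1 : ℤ) * a := by
      push_cast
      exact ((div_le_iff₀ ha).1 (Int.lt_floor_add_one _).le)
    have hlow' := int_mul_map_le_of_int_mul_le hpos hlow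
    have hupp' := int_mul_map_le_of_int_mul_le hpos hupp
    push_cast at hlow hupp hlow' hupp'
    rw [← Nat.abs_cast, ← abs_mul, abs_le]
    constructor
    · nlinarith [mul_le_mul_of_nonneg_left hlow' ha.le, mul_le_mul_of_nonneg_left hupp hha]
    · nlinarith [mul_le_mul_of_nonneg_left hupp' ha.le, mul_le_mul_of_nonneg_left hlow hha]
  have he : e = 0 := by
    by_contra hne
    obtain ⟨n, hn⟩ := exists_nat_gt (a * h a / |e|)
    rw [div_lt_iff₀ (abs_pos.2 hne)] at hn
    exact (bound n).not_gt hn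
  field_simp
  linarith

end AddMonoidHom

theorem stmt14_general (R₀ : AddSubgroup ℝ)
    (h1 : ∀ r : ℝ, ∃ a ∈ R₀, ∃ p : ℝ, 0 ≤ p ∧ r = a - p)
    (h : R₀ →+ ℝ) (hpos : ∀ x : R₀, 0 ≤ (x : ℝ) → 0 ≤ h x) :
    ∃ hbar : ℝ →+ ℝ, (∀ x : ℝ, 0 ≤ x → 0 ≤ hbar x) ∧
      ∀ x : R₀, hbar (x : ℝ) = h x := by
  obtain ⟨a, haR, p, hp, hap⟩ := h1 1
  have ha : (0 : ℝ) < a := by linarith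
  refine ⟨AddMonoidHom.mulLeft (h ⟨a, haR⟩ / a), fun x hx => ?_, fun x => ?_⟩
  · exact mul_nonneg (div_nonneg (hpos _ ha.le) ha.le) hx
  · exact (h.map_eq_div_mul hpos (a := ⟨a, haR⟩) ha x).symm

theorem stmt14 (R₀ : AddSubgroup ℝ)
    (h1 : ∀ r : ℝ, ∃ a ∈ R₀, ∃ p : ℝ, 0 ≤ p ∧ r = a - p)
    (h2 : ∀ r : ℝ, ∃ a ∈ R₀, ∃ p : ℝ, 0 ≤ p ∧ r = p - a)
    (h : R₀ →+ ℝ) (hpos : ∀ x : R₀, 0 ≤ (x : ℝ) → 0 ≤ h x) :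
    ∃ hbar : ℝ →+ ℝ, (∀ x : ℝ, 0 ≤ x → 0 ≤ hbar x) ∧
      ∀ x : R₀, hbar (x : ℝ) = h x :=
  stmt14_general R₀ h1 h hpos
end

section
/- Let A : ℝ^n → ℝ^s and B : ℝ^n → ℝ^t be linear maps, u ∈ ℝ^s, v ∈ ℝ^t, and suppose the system A x ≤ u (componentwise) is consistent. Then {x : B x ≤ v} ⊇ {x : A x ≤ u} if and only if there exists a t × s matrix 𝔛 with nonnegative entries such that B = 𝔛 A and 𝔛 u ≤ v. -/
open Finset in
lemma cone_carath {ι : Type*} [Fintype ι] [DecidableEq ι] {H : Type*} [AddCommGroup H]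
    [Module ℝ H] (w : ι → H) (S : Finset ι) :
    ∀ c : ι → ℝ, (∀ i, 0 ≤ c i) → (∀ i ∉ S, c i = 0) →
    ∃ (T : Finset ι) (c' : ι → ℝ), T ⊆ S ∧ (∀ i, 0 ≤ c' i) ∧ (∀ i ∉ T, c' i = 0) ∧
      ∑ i, c' i • w i = ∑ i, c i • w i ∧ LinearIndependent ℝ (fun i : T => w i) := by
  induction S using Finset.strongInduction with
  | _ S ih =>
    intro c hc hsupp
    by_cases hli : LinearIndependent ℝ (fun i : S => w i)
    · exact ⟨S, c, subset_rfl, hc, hsupp, rfl, hli⟩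
    obtain ⟨g, hgsum, i₁, hgi₁⟩ := Fintype.not_linearIndependent_iff.mp hli
    -- make a relation with a positive coefficient
    set g' : S → ℝ := if 0 < g i₁ then g else -g with hg'
    have hg'sum : ∑ i : S, g' i • w i = 0 := by
      rw [hg']; split
      · exact hgsum
      · simp only [Pi.neg_apply, neg_smul, Finset.sum_neg_distrib, hgsum, neg_zero]
    have hg'i₁ : 0 < g' i₁ := by
      rw [hg']
      rcases lt_or_gt_of_ne hgi₁ with h | h
      · rw [if_neg (not_lt.mpr h.le)]; simpa using h
      · rw [if_pos h]; exact h
    classical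
    set d : ι → ℝ := fun i => if h : i ∈ S then g' ⟨i, h⟩ else 0 with hd
    have hdS : ∀ i ∉ S, d i = 0 := fun i hi => by simp [hd, hi]
    have hdsum : ∑ i, d i • w i = 0 := by
      rw [← Finset.sum_subset (Finset.subset_univ S) (fun i _ hi => by rw [hdS i hi, zero_smul])]
      rw [← Finset.sum_attach S (fun i => d i • w i), ← hg'sum]
      exact Finset.sum_congr rfl fun i _ => by simp [hd, i.2]
    set P : Finset ι := S.filter (fun i => 0 < d i) with hP
    have hPne : P.Nonempty := ⟨i₁, by simp [hP, hd, i₁.2, hg'i₁]⟩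
    set t : ℝ := P.inf' hPne (fun i => c i / d i) with ht
    have ht0 : 0 ≤ t := by
      apply Finset.le_inf'
      intro i hi
      exact div_nonneg (hc i) (le_of_lt (Finset.mem_filter.mp hi).2)
    obtain ⟨i₀, hi₀P, hi₀⟩ := Finset.exists_mem_eq_inf' hPne (fun i => c i / d i)
    have hi₀S : i₀ ∈ S := (Finset.mem_filter.mp hi₀P).1
    have hdi₀ : 0 < d i₀ := (Finset.mem_filter.mp hi₀P).2
    set c' : ι → ℝ := fun i => c i - t * d i with hc'
    have hc'0 : ∀ i, 0 ≤ c' i := by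
      intro i
      simp only [hc']
      rcases le_or_gt (d i) 0 with h | h
      · have : t * d i ≤ 0 := mul_nonpos_of_nonneg_of_nonpos ht0 h
        linarith [hc i]
      · have hiP : i ∈ P := by
          refine Finset.mem_filter.mpr ⟨?_, h⟩
          by_contra hiS
          rw [hdS i hiS] at h; exact lt_irrefl 0 h
        have := Finset.inf'_le (fun i => c i / d i) hiP
        rw [← ht] at this
        have := (le_div_iff₀ h).mp this
        linarith
    have hc'i₀ : c' i₀ = 0 := by
      rw [← ht] at hi₀
      simp only [hc', hi₀, div_mul_cancel₀ _ (ne_of_gt hdi₀)]; ring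
    have hc'supp : ∀ i ∉ S.erase i₀, c' i = 0 := by
      intro i hi
      rcases Decidable.em (i = i₀) with rfl | hne
      · exact hc'i₀
      · have hiS : i ∉ S := fun h => hi (Finset.mem_erase.mpr ⟨hne, h⟩)
        simp only [hc', hsupp i hiS, hdS i hiS]; ring
    have hc'sum : ∑ i, c' i • w i = ∑ i, c i • w i := by
      simp only [hc', sub_smul, mul_smul, Finset.sum_sub_distrib, ← Finset.smul_sum, hdsum,
        smul_zero, sub_zero]
    obtain ⟨T, c'', hT, h1, h2, h3, h4⟩ :=
      ih (S.erase i₀) (Finset.erase_ssubset hi₀S) c' hc'0 hc'supp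
    exact ⟨T, c'', hT.trans (Finset.erase_subset _ _), h1, h2, h3.trans hc'sum, h4⟩

lemma coneSet_isClosed {ι : Type*} [Fintype ι] {H : Type*} [NormedAddCommGroup H]
    [NormedSpace ℝ H] [FiniteDimensional ℝ H] (w : ι → H) :
    IsClosed {x : H | ∃ c : ι → ℝ, (∀ i, 0 ≤ c i) ∧ x = ∑ i, c i • w i} := by
  classical
  have key : {x : H | ∃ c : ι → ℝ, (∀ i, 0 ≤ c i) ∧ x = ∑ i, c i • w i} =
      ⋃ T ∈ {T : Finset ι | LinearIndependent ℝ (fun i : T => w i)},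
        (fun c : T → ℝ => ∑ i, c i • w (i : ι)) '' {c | ∀ i, 0 ≤ c i} := by
    ext x
    simp only [Set.mem_setOf_eq, Set.mem_iUnion, Set.mem_image, exists_prop]
    constructor
    · rintro ⟨c, hc, rfl⟩
      obtain ⟨T, c', -, h1, h2, h3, h4⟩ :=
        cone_carath w Finset.univ c hc (fun i hi => absurd (Finset.mem_univ i) hi)
      refine ⟨T, h4, fun i => c' i, fun i => h1 i, ?_⟩
      rw [← h3,
        ← Finset.sum_subset (Finset.subset_univ T) (fun i _ hi => by rw [h2 i hi, zero_smul])]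
      exact Finset.sum_coe_sort T (fun i => c' i • w i)
    · rintro ⟨T, hT, c, hc, rfl⟩
      refine ⟨fun i => if h : i ∈ T then c ⟨i, h⟩ else 0, fun i => ?_, ?_⟩
      · dsimp only
        split
        · exact hc _
        · exact le_refl 0
      · dsimp only
        rw [← Finset.sum_subset (Finset.subset_univ T)
            (fun i _ hi => by rw [dif_neg hi, zero_smul]),
          ← Finset.sum_coe_sort T (fun i => (if h : i ∈ T then c ⟨i, h⟩ else 0) • w i)]
        exact Finset.sum_congr rfl fun i _ => by rw [dif_pos i.2]
  rw [key]
  apply Set.Finite.isClosed_biUnion (Set.toFinite _)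
  intro T hT
  set f : (T → ℝ) →ₗ[ℝ] H :=
    { toFun := fun c => ∑ i, c i • w (i : ι)
      map_add' := fun c₁ c₂ => by simp [add_smul, Finset.sum_add_distrib]
      map_smul' := fun r c => by simp [mul_smul, Finset.smul_sum] } with hf
  have hker : LinearMap.ker f = ⊥ := by
    rw [LinearMap.ker_eq_bot']
    intro c hcf
    funext i
    exact Fintype.linearIndependent_iff.mp hT c hcf i
  have hemb := LinearMap.isClosedEmbedding_of_injective hker
  have hclosed : IsClosed {c : T → ℝ | ∀ i, 0 ≤ c i} := by
    have : {c : T → ℝ | ∀ i, 0 ≤ c i} = Set.pi Set.univ (fun _ => Set.Ici (0 : ℝ)) := by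
      ext c
      simp only [Set.mem_setOf_eq, Set.mem_univ_pi, Set.mem_Ici]
    rw [this]
    exact isClosed_set_pi fun i _ => isClosed_Ici
  exact hemb.isClosedMap _ hclosed

open scoped InnerProductSpace

lemma farkas_aff {n s : ℕ} (a : Fin s → Fin n → ℝ) (u : Fin s → ℝ) (b : Fin n → ℝ) (c : ℝ)
    (hcons : ∃ x : Fin n → ℝ, ∀ i, ∑ m, a i m * x m ≤ u i)
    (h : ∀ x : Fin n → ℝ, (∀ i, ∑ m, a i m * x m ≤ u i) → ∑ m, b m * x m ≤ c) :
    ∃ y : Fin s → ℝ, (∀ i, 0 ≤ y i) ∧ (∀ m, b m = ∑ i, y i * a i m) ∧ ∑ i, y i * u i ≤ c := by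
  classical
  set g : Fin (s + 1) → EuclideanSpace ℝ (Fin (n + 1)) :=
    Fin.cons (WithLp.toLp 2 (Fin.cons 1 0)) (fun i => WithLp.toLp 2 (Fin.cons (u i) (a i))) with hg
  have inner_eq : ∀ x y : EuclideanSpace ℝ (Fin (n + 1)), ⟪x, y⟫_ℝ = ∑ i, x i * y i := by
    intro x y
    simp [PiLp.inner_apply, RCLike.inner_apply, conj_trivial, mul_comm]
  have sum_apply : ∀ (cc : Fin (s + 1) → ℝ) (k : Fin (n + 1)),
      (∑ j, cc j • g j) k = ∑ j, cc j * g j k := by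
    intro cc k
    rw [WithLp.ofLp_sum, Finset.sum_apply]
    rfl
  set K : ConvexCone ℝ (EuclideanSpace ℝ (Fin (n + 1))) :=
    { carrier := {x | ∃ cc : Fin (s + 1) → ℝ, (∀ j, 0 ≤ cc j) ∧ x = ∑ j, cc j • g j}
      smul_mem' := by
        rintro r hr x ⟨cc, hcc, rfl⟩
        exact ⟨fun j => r * cc j, fun j => mul_nonneg hr.le (hcc j),
          by rw [Finset.smul_sum]; exact Finset.sum_congr rfl fun j _ => (mul_smul _ _ _).symm⟩
      add_mem' := by
        rintro x ⟨cx, hcx, rfl⟩ y ⟨cy, hcy, rfl⟩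
        exact ⟨fun j => cx j + cy j, fun j => add_nonneg (hcx j) (hcy j),
          by
            rw [← Finset.sum_add_distrib]
            exact Finset.sum_congr rfl fun j _ => (add_smul _ _ _).symm⟩ } with hK
  have hne : ((K : Set (EuclideanSpace ℝ (Fin (n + 1))))).Nonempty :=
    ⟨0, ⟨fun _ => 0, fun j => le_refl 0, by simp⟩⟩
  have hcl : IsClosed (K : Set (EuclideanSpace ℝ (Fin (n + 1)))) := coneSet_isClosed g
  have hmemgen : ∀ j, g j ∈ K := by
    intro j
    refine ⟨fun j' => if j' = j then 1 else 0, fun j' => by dsimp only; split <;> norm_num, ?_⟩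
    simp [ite_smul]
  have key : ∀ (w : Fin n → ℝ) (y : EuclideanSpace ℝ (Fin (n + 1))), 0 < y 0 →
      ∑ m, w m * (-(y m.succ) / y 0) = (-(∑ m, w m * y m.succ)) / y 0 := by
    intro w y hy
    calc ∑ m, w m * (-(y m.succ) / y 0) = ∑ m, -(w m * y m.succ) / y 0 :=
          Finset.sum_congr rfl fun m _ => by ring
      _ = (∑ m, -(w m * y m.succ)) / y 0 := by rw [Finset.sum_div]
      _ = (-(∑ m, w m * y m.succ)) / y 0 := by rw [Finset.sum_neg_distrib]
  have htarget : ∃ cc : Fin (s + 1) → ℝ, (∀ j, 0 ≤ cc j) ∧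
      (WithLp.toLp 2 (Fin.cons c b) : EuclideanSpace ℝ (Fin (n + 1))) = ∑ j, cc j • g j := by
    by_contra hnot
    have hnot' : (WithLp.toLp 2 (Fin.cons c b) : EuclideanSpace ℝ (Fin (n + 1))) ∉ K := hnot
    obtain ⟨y, hy1, hy2⟩ :=
      ProperCone.hyperplane_separation' (E := EuclideanSpace ℝ (Fin (n + 1)))
        ({ carrier := (K : Set (EuclideanSpace ℝ (Fin (n + 1))))
           add_mem' := fun hx hy => K.add_mem hx hy
           zero_mem' := ⟨fun _ => 0, fun _ => le_refl 0, by simp⟩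
           smul_mem' := by
             rintro ⟨r, hr⟩ x ⟨cc, hcc, rfl⟩
             exact ⟨fun j => r * cc j, fun j => mul_nonneg hr (hcc j),
               by
                 show r • ∑ j, cc j • g j = _
                 rw [Finset.smul_sum]; exact Finset.sum_congr rfl fun j _ => (mul_smul _ _ _).symm⟩
           isClosed' := hcl } : ProperCone ℝ (EuclideanSpace ℝ (Fin (n + 1)))) hnot'
    have h0 : 0 ≤ y 0 := by
      have := hy1 _ (hmemgen 0)
      rw [inner_eq] at this
      simpa [hg, Fin.sum_univ_succ] using this
    have hrows : ∀ i : Fin s, 0 ≤ u i * y 0 + ∑ m, a i m * y m.succ := by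
      intro i
      have := hy1 _ (hmemgen i.succ)
      rw [inner_eq] at this
      simpa [hg, Fin.sum_univ_succ] using this
    have hlt : y 0 * c + ∑ m, y m.succ * b m < 0 := by
      have := hy2
      rw [inner_eq] at this
      simpa [Fin.sum_univ_succ, mul_comm] using this
    have comm : ∑ m, y m.succ * b m = ∑ m, b m * y m.succ :=
      Finset.sum_congr rfl fun m _ => mul_comm _ _
    rw [comm] at hlt
    rcases eq_or_lt_of_le h0 with heq | hpos
    · -- y 0 = 0
      obtain ⟨x₀, hx₀⟩ := hcons
      set Sb := ∑ m, b m * y m.succ with hSb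
      have hSblt : Sb < 0 := by rw [← heq] at hlt; simpa using hlt
      set lam := max 0 ((c + 1 - ∑ m, b m * x₀ m) / (-Sb)) with hlam
      have hlam0 : 0 ≤ lam := le_max_left _ _
      have expand : ∀ w : Fin n → ℝ,
          ∑ m, w m * (x₀ m - lam * y m.succ)
            = ∑ m, w m * x₀ m - lam * ∑ m, w m * y m.succ := by
        intro w
        rw [Finset.mul_sum, ← Finset.sum_sub_distrib]
        exact Finset.sum_congr rfl fun m _ => by ring
      have hxfeas : ∀ i, ∑ m, a i m * (x₀ m - lam * y m.succ) ≤ u i := by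
        intro i
        rw [expand]
        have hSi : 0 ≤ ∑ m, a i m * y m.succ := by
          have := hrows i; rw [← heq] at this; simpa using this
        have : 0 ≤ lam * ∑ m, a i m * y m.succ := mul_nonneg hlam0 hSi
        linarith [hx₀ i]
      have hb := h _ hxfeas
      rw [expand] at hb
      have hge : (c + 1 - ∑ m, b m * x₀ m) ≤ lam * (-Sb) := by
        have h1 : (c + 1 - ∑ m, b m * x₀ m) / (-Sb) ≤ lam := le_max_right _ _
        calc c + 1 - ∑ m, b m * x₀ m
            = ((c + 1 - ∑ m, b m * x₀ m) / (-Sb)) * (-Sb) :=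
              (div_mul_cancel₀ _ (by linarith)).symm
          _ ≤ lam * (-Sb) := mul_le_mul_of_nonneg_right h1 (by linarith)
      rw [← hSb] at hb
      nlinarith
    · -- y 0 > 0
      have hxfeas : ∀ i, ∑ m, a i m * (-(y m.succ) / y 0) ≤ u i := by
        intro i
        rw [key _ _ hpos, div_le_iff₀ hpos]
        have := hrows i
        linarith
      have hb := h _ hxfeas
      rw [key _ _ hpos, div_le_iff₀ hpos] at hb
      nlinarith
  obtain ⟨cc, hcc, hsum⟩ := htarget
  refine ⟨fun i => cc i.succ, fun i => hcc _, ?_, ?_⟩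
  · intro m
    have e1 := congrArg (fun z : EuclideanSpace ℝ (Fin (n + 1)) => z m.succ) hsum
    simp only [sum_apply] at e1
    simpa [hg, Fin.sum_univ_succ] using e1
  · have e0 := congrArg (fun z : EuclideanSpace ℝ (Fin (n + 1)) => z 0) hsum
    simp only [sum_apply] at e0
    simp only [hg, Fin.sum_univ_succ, Fin.cons_zero, Fin.cons_succ, mul_one] at e0
    dsimp only
    linarith [hcc 0]


theorem stmt15 (n s t : ℕ)
    (A : (Fin n → ℝ) →ₗ[ℝ] (Fin s → ℝ)) (B : (Fin n → ℝ) →ₗ[ℝ] (Fin t → ℝ))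
    (u : Fin s → ℝ) (v : Fin t → ℝ)
    (hcons : ∃ x : Fin n → ℝ, ∀ i, A x i ≤ u i) :
    {x : Fin n → ℝ | ∀ i, A x i ≤ u i} ⊆ {x : Fin n → ℝ | ∀ j, B x j ≤ v j} ↔
      ∃ 𝔛 : Matrix (Fin t) (Fin s) ℝ, (∀ j i, 0 ≤ 𝔛 j i) ∧
        (∀ x : Fin n → ℝ, B x = 𝔛.mulVec (A x)) ∧
        ∀ j, 𝔛.mulVec u j ≤ v j := by
  classical
  set a : Fin s → Fin n → ℝ := fun i m => A (fun j => if m = j then 1 else 0) i with ha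
  set bb : Fin t → Fin n → ℝ := fun j m => B (fun k => if m = k then 1 else 0) j with hb
  have hA : ∀ x i, A x i = ∑ m, a i m * x m := by
    intro x i
    have e := congrFun (LinearMap.pi_apply_eq_sum_univ A x) i
    rw [e, Finset.sum_apply]
    exact Finset.sum_congr rfl fun m _ => by simp [ha, mul_comm]
  have hB : ∀ x j, B x j = ∑ m, bb j m * x m := by
    intro x j
    have e := congrFun (LinearMap.pi_apply_eq_sum_univ B x) j
    rw [e, Finset.sum_apply]
    exact Finset.sum_congr rfl fun m _ => by simp [hb, mul_comm]
  constructor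
  · intro hsub
    have hfark : ∀ j : Fin t, ∃ y : Fin s → ℝ, (∀ i, 0 ≤ y i) ∧
        (∀ m, bb j m = ∑ i, y i * a i m) ∧ ∑ i, y i * u i ≤ v j := by
      intro j
      apply farkas_aff
      · obtain ⟨x, hx⟩ := hcons
        exact ⟨x, fun i => by rw [← hA]; exact hx i⟩
      · intro x hx
        have hx' : x ∈ {x : Fin n → ℝ | ∀ i, A x i ≤ u i} :=
          fun i => by rw [hA]; exact hx i
        have := hsub hx' j
        rw [hB x j] at this
        exact this
    choose Y hY0 hYb hYu using hfark
    refine ⟨Matrix.of Y, fun j i => hY0 j i, ?_, ?_⟩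
    · intro x
      funext j
      simp only [Matrix.mulVec, dotProduct, Matrix.of_apply]
      calc B x j = ∑ m, bb j m * x m := hB x j
        _ = ∑ m, (∑ i, Y j i * a i m * x m) := Finset.sum_congr rfl fun m _ => by
              rw [hYb j m, Finset.sum_mul]
        _ = ∑ i, ∑ m, Y j i * a i m * x m := Finset.sum_comm
        _ = ∑ i, Y j i * A x i := Finset.sum_congr rfl fun i _ => by
              rw [hA]
              rw [Finset.mul_sum]
              exact Finset.sum_congr rfl fun m _ => by ring
    · intro j
      simp only [Matrix.mulVec, dotProduct, Matrix.of_apply]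
      exact hYu j
  · rintro ⟨X, hX0, hXB, hXu⟩ x hx j
    have e : B x j = ∑ i, X j i * A x i := by
      rw [hXB x]
      simp [Matrix.mulVec, dotProduct]
    rw [e]
    calc ∑ i, X j i * A x i ≤ ∑ i, X j i * u i :=
        Finset.sum_le_sum fun i _ => mul_le_mul_of_nonneg_left (hx i) (hX0 j i)
      _ ≤ v j := by
          have := hXu j
          simpa [Matrix.mulVec, dotProduct] using this
end
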